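/- arXiv:0911.4975 — 12 statements merged into one kernel-verified Lean document; each statement's English description precedes it below -/
import Mathlib

section
/- If a formal power series f ∈ ℚ⟦X⟧ is algebraic — that is, there exist polynomials p_0, …, p_d ∈ ℚ[X], not all zero, such that ∑_{i=0}^{d} p_i(X)·f^i = 0 in ℚ⟦X⟧ (each p_i being viewed as a power series) — then the coefficient sequence of f is P-recursive: there exist k ∈ ℕ, polynomials q_0, …, q_k ∈ ℚ[X], not all zero, and N ∈ ℕ such that for every n ≥ N, ∑_{i=0}^{k} q_i(n)·(coefficient of X^{n−i} in f) = 0. -/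
/-!
Multiplying a linear ODE `∑ bᵢ(X) Dⁱ f = 0` by `Xʳ` turns it into a P-recurrence, because
`Xⁱ Dⁱ` multiplies the `n`-th coefficient by the falling factorial `n(n-1)⋯(n-i+1)`. So it suffices
to find such an ODE. Let `q(X, Y)` be an irreducible polynomial with `q(X, f) = 0`. Every
derivative `Dⁿ f` is a polynomial in `f` with coefficients in `K(X)`: this holds for `f`, and
differentiating `q(X, f) = 0` gives `f' = -q^D(f) / q_Y(f)`, where `q^D` differentiates the
coefficients of `q`, and `q_Y(f)` is invertible modulo `q` because `q` is separable in
characteristic zero. Modulo `q` these polynomials live in a `K(X)`-vector space of dimension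
`deg_Y q`, so `f, Df, …, D^{deg_Y q} f` are linearly dependent over `K[X]`.
-/

open PowerSeries
open scoped Polynomial

def IsPRecursive {R : Type*} [CommRing R] (a : ℕ → R) : Prop :=
  ∃ (k N : ℕ) (q : ℕ → R[X]), (∃ i, i ≤ k ∧ q i ≠ 0) ∧
    ∀ n : ℕ, N ≤ n → ∑ i ∈ Finset.range (k + 1), (q i).eval (n : R) * a (n - i) = 0

lemma UniqueFactorizationMonoid.exists_irreducible_map_eq_zero {R S : Type*} [CommRing R]
    [IsDomain R] [UniqueFactorizationMonoid R] [CommRing S] [IsDomain S] (φ : R →+* S) {a : R}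
    (ha : a ≠ 0) (h : φ a = 0) : ∃ p, Irreducible p ∧ φ p = 0 := by
  obtain ⟨u, hu⟩ := factors_prod ha
  rw [← hu, map_mul, mul_eq_zero, map_multiset_prod, Multiset.prod_eq_zero_iff] at h
  obtain ⟨p, hp, hp0⟩ := Multiset.mem_map.mp (h.resolve_right (u.isUnit.map φ).ne_zero)
  exact ⟨p, irreducible_of_factor p hp, hp0⟩

namespace Polynomial

section FractionRing

variable {A F S : Type*} [CommRing A] [IsDomain A] [Field F] [Algebra A F] [IsFractionRing A F]

lemma exists_dvd_C_mul_of_map_dvd_map {p P : A[X]}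
    (h : p.map (algebraMap A F) ∣ P.map (algebraMap A F)) : ∃ b : A, b ≠ 0 ∧ p ∣ C b * P := by
  obtain ⟨s, hs⟩ := h
  obtain ⟨b, hb, hbs⟩ := IsLocalization.integerNormalization_spec (nonZeroDivisors A) s
  refine ⟨b, nonZeroDivisors.ne_zero hb, IsLocalization.integerNormalization (nonZeroDivisors A) s,
    map_injective _ (IsFractionRing.injective A F) ?_⟩
  rw [Polynomial.map_mul, Polynomial.map_mul, hbs, hs, map_C,
    ← IsScalarTower.algebraMap_smul F b s, smul_eq_C_mul]
  ring

lemma aeval_eq_zero_of_map_dvd_map [CommRing S] [IsDomain S] [Algebra A S]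
    (hinj : Function.Injective (algebraMap A S)) {x : S} {p P : A[X]} (hp : aeval x p = 0)
    (h : p.map (algebraMap A F) ∣ P.map (algebraMap A F)) : aeval x P = 0 := by
  obtain ⟨b, hb, t, ht⟩ := exists_dvd_C_mul_of_map_dvd_map h
  have : algebraMap A S b * aeval x P = 0 := by
    rw [← aeval_C x b, ← map_mul, ht, map_mul, hp, zero_mul]
  exact (mul_eq_zero.mp this).resolve_left ((map_ne_zero_iff _ hinj).mpr hb)

end FractionRing

/-- Over `Frac A` the values `T(x)` live in `Frac A[Y] ⧸ (q)`, of dimension `natDegree q`. -/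
lemma not_linearIndependent_aeval {A S ι : Type*} [CommRing A] [IsDomain A] [CommRing S]
    [IsDomain S] [Algebra A S] (hinj : Function.Injective (algebraMap A S)) {x : S} {q : A[X]}
    (hq : q ≠ 0) (hroot : aeval x q = 0) [Fintype ι] (hcard : q.natDegree < Fintype.card ι)
    (T : ι → A[X]) : ¬ LinearIndependent A fun i => aeval x (T i) := by
  intro hli
  set F := FractionRing A
  set q' := q.map (algebraMap A F)
  have hq' : q' ≠ 0 := (Polynomial.map_ne_zero_iff (IsFractionRing.injective A F)).mpr hq
  have hv : LinearIndependent A fun i => AdjoinRoot.mk q' ((T i).map (algebraMap A F)) := by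
    rw [Fintype.linearIndependent_iff] at hli ⊢
    intro c hc
    refine hli c ?_
    have hdvd : q' ∣ (∑ i, C (c i) * T i).map (algebraMap A F) := by
      rw [← AdjoinRoot.mk_eq_zero, ← hc]
      simp [Polynomial.map_sum, Algebra.smul_def, AdjoinRoot.algebraMap_eq,
        IsScalarTower.algebraMap_apply A F (AdjoinRoot q')]
    simpa [Algebra.smul_def] using aeval_eq_zero_of_map_dvd_map hinj hroot hdvd
  have := (AdjoinRoot.powerBasis hq').finite
  have := ((LinearIndependent.iff_fractionRing A F).mp hv).fintype_card_le_finrank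
  rw [(AdjoinRoot.powerBasis hq').finrank, AdjoinRoot.powerBasis_dim,
    natDegree_map_eq_of_injective (IsFractionRing.injective A F)] at this
  omega

variable {R : Type*} [CommRing R]

lemma linearIndependent_descPochhammer [IsDomain R] : LinearIndependent R (descPochhammer R) :=
  Sequence.linearIndependent ⟨descPochhammer R, fun i => by
    rw [degree_eq_natDegree (monic_descPochhammer R i).ne_zero, descPochhammer_natDegree]⟩

lemma exists_sum_coeff_smul_descPochhammer_ne_zero [IsDomain R] {r k : ℕ}
    (B : Fin (r + 1) → R[X]) (hB : ∀ i, (B i).natDegree ≤ k) (hne : ∃ i, B i ≠ 0) :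
    ∃ s ≤ k, ∑ i, (B i).coeff s • descPochhammer R i ≠ 0 := by
  by_contra! h
  obtain ⟨i, hi⟩ := hne
  refine hi (ext fun s => ?_)
  by_cases hs : s ≤ k
  · exact Fintype.linearIndependent_iff.mp
      (linearIndependent_descPochhammer.comp _ Fin.val_injective) (fun j => (B j).coeff s)
      (h s hs) i
  · exact coeff_eq_zero_of_natDegree_lt (by grind [hB i])

lemma coeff_coe_mul_eq_sum_range (p : R[X]) (g : R⟦X⟧) {k n : ℕ}
    (hp : p.natDegree ≤ k) (hk : k ≤ n) :
    PowerSeries.coeff n ((p : R⟦X⟧) * g) =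
      ∑ s ∈ Finset.range (k + 1), p.coeff s * PowerSeries.coeff (n - s) g := by
  conv_lhs => rw [p.as_sum_range_C_mul_X_pow' (Nat.lt_succ_of_le hp),
    ← coeToPowerSeries.ringHom_apply, map_sum]
  simp only [coeToPowerSeries.ringHom_apply, Polynomial.coe_mul, coe_C, coe_pow, coe_X,
    Finset.sum_mul, map_sum, mul_assoc, PowerSeries.coeff_C_mul, PowerSeries.coeff_X_pow_mul']
  refine Finset.sum_congr rfl fun s hs => ?_
  rw [if_pos (by simp at hs; omega)]

end Polynomial

namespace PowerSeries

section CommRing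

variable {R : Type*} [CommRing R]

@[simp]
lemma algebraMap_polynomial_self (a : R[X]) : algebraMap R[X] R⟦X⟧ a = a := by
  simp [algebraMap_apply']

lemma algebraMap_polynomial_injective : Function.Injective (algebraMap R[X] R⟦X⟧) := by
  simp [Function.Injective]

lemma exists_derivative_aeval (f : R⟦X⟧) (T : R[X][X]) :
    ∃ T₁ : R[X][X], d⁄dX R (Polynomial.aeval f T) =
      Polynomial.aeval f T₁ + Polynomial.aeval f (Polynomial.derivative T) * d⁄dX R f := by
  induction T using Polynomial.induction_on' with
  | add p q hp hq =>
    obtain ⟨p₁, hp⟩ := hp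
    obtain ⟨q₁, hq⟩ := hq
    exact ⟨p₁ + q₁, by simp only [map_add, hp, hq]; ring⟩
  | monomial n a =>
    refine ⟨Polynomial.monomial n (Polynomial.derivative a), ?_⟩
    rw [Polynomial.derivative_monomial, Polynomial.aeval_monomial, Polynomial.aeval_monomial,
      Polynomial.aeval_monomial, map_mul (algebraMap R[X] R⟦X⟧), map_natCast]
    simp [derivative_coe]
    ring

lemma coeff_X_pow_mul_iterate_derivative (f : R⟦X⟧) (i n : ℕ) :
    coeff n (X ^ i * (d⁄dX R)^[i] f) = (descPochhammer R i).eval (n : R) * coeff n f := by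
  rw [coeff_X_pow_mul', descPochhammer_eval_eq_descFactorial]
  split_ifs with h
  · obtain ⟨m, rfl⟩ := Nat.exists_eq_add_of_le' h
    rw [coeff_iterate_derivative, Nat.add_sub_cancel, Nat.add_descFactorial_eq_ascFactorial]
  · rw [Nat.descFactorial_of_lt (by omega), Nat.cast_zero, zero_mul]

theorem isPRecursive_coeff_of_sum_iterate_derivative_eq_zero [IsDomain R] (f : R⟦X⟧) {r : ℕ}
    (b : Fin (r + 1) → R[X]) (hb : ∃ i, b i ≠ 0)
    (hode : ∑ i, (b i : R⟦X⟧) * (d⁄dX R)^[i] f = 0) :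
    IsPRecursive fun n => coeff n f := by
  set k := r + Finset.univ.sup fun i => (b i).natDegree
  set B : Fin (r + 1) → R[X] := fun i => Polynomial.X ^ (r - i) * b i
  have hB : ∀ i, (B i).natDegree ≤ k := fun i => by
    have := Finset.le_sup (f := fun i => (b i).natDegree) (Finset.mem_univ i)
    grw [Polynomial.natDegree_mul_le, Polynomial.natDegree_X_pow_le]
    omega
  have hBne : ∃ i, B i ≠ 0 := hb.imp fun i => (Polynomial.monic_X_pow _).mul_right_ne_zero
  -- `c s` is the coefficient of `Xˢ` in `Xʳ ∑ bᵢ Dⁱ` as a polynomial in `θ = X D`; the recurrence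
  -- evaluates it at `n - s`, hence the Taylor shift.
  set c : ℕ → R[X] := fun s => ∑ i, (B i).coeff s • descPochhammer R i
  obtain ⟨s₀, hs₀, hcs₀⟩ := Polynomial.exists_sum_coeff_smul_descPochhammer_ne_zero B hB hBne
  refine ⟨k, k, fun s => Polynomial.taylor (-(s : R)) (c s),
    ⟨s₀, hs₀, by simpa [Polynomial.taylor_eq_zero] using hcs₀⟩, fun n hn => ?_⟩
  have hX : (X : R⟦X⟧) ^ r * ∑ i, (b i : R⟦X⟧) * (d⁄dX R)^[i] f =
      ∑ i, (B i : R⟦X⟧) * (X ^ (i : ℕ) * (d⁄dX R)^[i] f) := by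
    rw [Finset.mul_sum]
    refine Finset.sum_congr rfl fun i _ => ?_
    rw [Polynomial.coe_mul, Polynomial.coe_pow, Polynomial.coe_X,
      ← pow_sub_mul_pow X (Nat.le_of_lt_succ i.isLt)]
    ring
  have hcoeff := congrArg (coeff n) hX
  rw [hode, mul_zero, map_zero, map_sum] at hcoeff
  simp only [Polynomial.coeff_coe_mul_eq_sum_range _ _ (hB _) hn,
    coeff_X_pow_mul_iterate_derivative] at hcoeff
  rw [hcoeff, Finset.sum_comm]
  refine Finset.sum_congr rfl fun s hs => ?_
  have hsn : s ≤ n := by simp at hs; omega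
  simp [c, Polynomial.taylor_eval, Polynomial.eval_finsetSum, Finset.sum_mul, mul_assoc,
    Nat.cast_sub hsn, sub_eq_add_neg]

end CommRing

variable {K : Type*} [Field K]

/-- `h = T(f) / γ` with `γ ∈ K[X]` and `T ∈ K[X][Y]`, i.e. `h ∈ K(X)[f]`. -/
def IsRatFuncPoly (f h : K⟦X⟧) : Prop :=
  ∃ γ : K[X], γ ≠ 0 ∧ ∃ T : K[X][X], (γ : K⟦X⟧) * h = Polynomial.aeval f T

lemma IsRatFuncPoly.derivative {f h : K⟦X⟧} (hh : IsRatFuncPoly f h)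
    (hf : IsRatFuncPoly f (d⁄dX K f)) : IsRatFuncPoly f (d⁄dX K h) := by
  obtain ⟨c, hc, V, hV⟩ := hf
  obtain ⟨γ, hγ, T, hT⟩ := hh
  obtain ⟨T₁, hT₁⟩ := exists_derivative_aeval f T
  have hdT := congrArg (d⁄dX K) hT
  rw [Derivation.leibniz, derivative_coe, hT₁, smul_eq_mul, smul_eq_mul] at hdT
  refine ⟨c * γ ^ 2, mul_ne_zero hc (pow_ne_zero 2 hγ),
    .C (c * γ) * T₁ + .C γ * Polynomial.derivative T * V - .C (c * Polynomial.derivative γ) * T, ?_⟩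
  simp only [map_add, map_sub, map_mul, Polynomial.aeval_C, algebraMap_polynomial_self,
    Polynomial.coe_mul, Polynomial.coe_pow]
  linear_combination (↑c * ↑γ : K⟦X⟧) * hdT + ↑γ * Polynomial.aeval f (Polynomial.derivative T) * hV
    - ↑c * ↑(Polynomial.derivative γ) * hT

lemma IsRatFuncPoly.iterate_derivative {f : K⟦X⟧} (hf : IsRatFuncPoly f (d⁄dX K f)) (n : ℕ) :
    IsRatFuncPoly f ((d⁄dX K)^[n] f) := by
  induction n with
  | zero => exact ⟨1, one_ne_zero, .X, by simp⟩
  | succ n ih => simpa only [Function.iterate_succ_apply'] using ih.derivative hf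

lemma isRatFuncPoly_derivative_of_irreducible [CharZero K] {f : K⟦X⟧} {q : K[X][X]}
    (hq : Irreducible q) (hroot : Polynomial.aeval f q = 0) : IsRatFuncPoly f (d⁄dX K f) := by
  set σ := algebraMap K[X] (RatFunc K)
  have hdeg : q.natDegree ≠ 0 :=
    (Polynomial.natDegree_pos_of_aeval_root hq.ne_zero hroot
      fun _ h => algebraMap_polynomial_injective (h.trans (map_zero _).symm)).ne'
  have hirr : Irreducible (q.map σ) :=
    (hq.isPrimitive hdeg).irreducible_iff_irreducible_map_fraction_map.mp hq
  obtain ⟨u, v, huv⟩ := hirr.separable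
  obtain ⟨c, hc, hcv⟩ := IsLocalization.integerNormalization_spec (nonZeroDivisors K[X]) v
  set V := IsLocalization.integerNormalization (nonZeroDivisors K[X]) v
  have hdvd : q.map σ ∣ (.C c - V * Polynomial.derivative q).map σ := by
    refine ⟨.C (σ c) * u, ?_⟩
    rw [Polynomial.map_sub, Polynomial.map_mul, hcv, Polynomial.map_C, ← Polynomial.derivative_map,
      ← IsScalarTower.algebraMap_smul (RatFunc K) c v, Polynomial.smul_eq_C_mul]
    linear_combination -(.C (σ c) : (RatFunc K)[X]) * huv
  -- Bézout for the coprime pair `q, q_Y` over `K(X)`, with denominators cleared: `V(f) q_Y(f) = c`.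
  have hinv := Polynomial.aeval_eq_zero_of_map_dvd_map algebraMap_polynomial_injective hroot hdvd
  obtain ⟨T₁, hT₁⟩ := exists_derivative_aeval f q
  rw [hroot, map_zero] at hT₁
  refine ⟨c, nonZeroDivisors.ne_zero hc, -(V * T₁), ?_⟩
  simp only [map_sub, map_mul, map_neg, Polynomial.aeval_C, algebraMap_polynomial_self] at hinv ⊢
  linear_combination d⁄dX K f * hinv - Polynomial.aeval f V * hT₁

theorem exists_sum_iterate_derivative_eq_zero [CharZero K] {f : K⟦X⟧}
    (hf : IsAlgebraic K[X] f) :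
    ∃ (r : ℕ) (b : Fin (r + 1) → K[X]), (∃ i, b i ≠ 0) ∧
      ∑ i, (b i : K⟦X⟧) * (d⁄dX K)^[i] f = 0 := by
  obtain ⟨Q, hQ, hQf⟩ := hf
  obtain ⟨q, hq, hqf⟩ :=
    UniqueFactorizationMonoid.exists_irreducible_map_eq_zero (Polynomial.aeval f).toRingHom hQ hQf
  choose γ hγ T hT using (isRatFuncPoly_derivative_of_irreducible hq hqf).iterate_derivative
  obtain ⟨c, hc, i, hi⟩ := Fintype.not_linearIndependent_iff.mp <|
    Polynomial.not_linearIndependent_aeval algebraMap_polynomial_injective hq.ne_zero hqf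
      (ι := Fin (q.natDegree + 1)) (by simp) fun n => T n
  refine ⟨q.natDegree, fun n => c n * γ n, ⟨i, mul_ne_zero hi (hγ i)⟩, ?_⟩
  simpa [Algebra.smul_def, ← hT, mul_assoc] using hc

theorem isPRecursive_coeff_of_isAlgebraic [CharZero K] {f : K⟦X⟧} (hf : IsAlgebraic K[X] f) :
    IsPRecursive fun n => coeff n f := by
  obtain ⟨r, b, hb, hode⟩ := exists_sum_iterate_derivative_eq_zero hf
  exact isPRecursive_coeff_of_sum_iterate_derivative_eq_zero f b hb hode

end PowerSeries

/-- Stanley's theorem: the coefficient sequence of an algebraic formal power series over `ℚ`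
is P-recursive. -/
theorem stmt2 (f : PowerSeries ℚ) (d : ℕ) (p : ℕ → Polynomial ℚ)
    (hp : ∃ i, i ≤ d ∧ p i ≠ 0)
    (hf : ∑ i ∈ Finset.range (d + 1), (p i : PowerSeries ℚ) * f ^ i = 0) :
    ∃ (k N : ℕ) (q : ℕ → Polynomial ℚ), (∃ i, i ≤ k ∧ q i ≠ 0) ∧
      ∀ n : ℕ, N ≤ n →
        ∑ i ∈ Finset.range (k + 1), (q i).eval (n : ℚ) * PowerSeries.coeff (n - i) f = 0 := by
  refine isPRecursive_coeff_of_isAlgebraic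
    ⟨∑ i ∈ Finset.range (d + 1), .C (p i) * .X ^ i, fun h => ?_, by simpa [map_sum] using hf⟩
  obtain ⟨i, hi, hpi⟩ := hp
  have := congrArg (Polynomial.coeff · i) h
  simp [Nat.lt_succ_of_le hi] at this
  exact hpi this
end

section
/- The exponential power series exp(X) = ∑_{n≥0} X^n/n! in ℚ⟦X⟧ is not algebraic over ℚ[X]: for any polynomials p_0, …, p_d ∈ ℚ[X], not all zero, the power series ∑_{i=0}^{d} p_i(X)·exp(X)^i is nonzero in ℚ⟦X⟧. -/
/-!
Differentiating a relation `∑ pᵢ eⁱ = 0` (with `e = exp X`) and subtracting `d` times it gives the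
relation `∑ (pᵢ' + (i - d) pᵢ) eⁱ = 0`, whose top coefficient is `p_d'`. Doing this
`deg p_d + 1` times kills the top coefficient, so by induction on `d` all the new lower
coefficients vanish. For `c ≠ 0` the map `f ↦ f' + c f` is injective on polynomials (compare
leading coefficients), hence so are its powers, and the original `pᵢ` with `i < d` vanish; then
`p_d eᵈ = 0` forces `p_d = 0` since `e` is a unit.
-/

open PowerSeries

namespace Polynomial

theorem derivative_add_smul_one_injective {R : Type*} [CommRing R] [NoZeroDivisors R] {c : R}
    (hc : c ≠ 0) : Function.Injective (derivative + c • 1 : Module.End R R[X]) := by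
  refine (injective_iff_map_eq_zero _).mpr fun f hf => ?_
  have hlead : (derivative f + c • f).coeff f.natDegree = c * f.leadingCoeff := by
    rw [coeff_add, coeff_derivative, coeff_eq_zero_of_natDegree_lt (Nat.lt_succ_self _),
      zero_mul, zero_add, coeff_smul, smul_eq_mul, leadingCoeff]
  have hf' : derivative f + c • f = 0 := hf
  rw [hf', coeff_zero, eq_comm, mul_eq_zero] at hlead
  exact leadingCoeff_eq_zero.mp (hlead.resolve_left hc)

end Polynomial

namespace PowerSeries

variable {R : Type*} [CommRing R] [Algebra ℚ R]

theorem coe_mul_exp_pow_eq_zero_iff {f : Polynomial R} {i : ℕ} :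
    (f : R⟦X⟧) * exp R ^ i = 0 ↔ f = 0 := by
  rw [((isUnit_exp R).pow i).mul_left_eq_zero, Polynomial.coe_eq_zero_iff]

theorem derivative_exp_pow (i : ℕ) : d⁄dX R (exp R ^ i) = i * exp R ^ i := by
  rw [derivative_pow, derivative_exp, mul_assoc, ← pow_succ]
  cases i <;> simp

theorem derivative_sub_smul_one_coe_mul_exp_pow (c : R) (f : Polynomial R) (i : ℕ) :
    ((d⁄dX R : R⟦X⟧ →ₗ[R] R⟦X⟧) - c • 1) ((f : R⟦X⟧) * exp R ^ i)
      = ((Polynomial.derivative + ((i : R) - c) • 1 : Module.End R (Polynomial R)) f : R⟦X⟧)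
        * exp R ^ i := by
  simp only [LinearMap.sub_apply, LinearMap.smul_apply, LinearMap.add_apply, Module.End.one_apply,
    Derivation.coeFn_coe, Derivation.leibniz, derivative_exp_pow, derivative_coe, smul_eq_mul,
    Polynomial.coe_add, Polynomial.smul_eq_C_mul, Polynomial.coe_mul, Polynomial.coe_C,
    PowerSeries.smul_eq_C_mul]
  rw [map_sub, map_natCast]
  ring

theorem pow_derivative_sub_smul_one_coe_mul_exp_pow (c : R) (f : Polynomial R) (i k : ℕ) :
    (((d⁄dX R : R⟦X⟧ →ₗ[R] R⟦X⟧) - c • 1 : Module.End R R⟦X⟧) ^ k) ((f : R⟦X⟧) * exp R ^ i)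
      = (((Polynomial.derivative + ((i : R) - c) • 1 : Module.End R (Polynomial R)) ^ k) f :
          R⟦X⟧) * exp R ^ i := by
  induction k with
  | zero => rfl
  | succ k ih =>
    rw [pow_succ', Module.End.mul_apply, ih, derivative_sub_smul_one_coe_mul_exp_pow, pow_succ',
      Module.End.mul_apply]

theorem eq_zero_of_sum_coe_mul_exp_pow_eq_zero [IsDomain R] {d : ℕ} {p : ℕ → Polynomial R}
    (h : ∑ i ∈ Finset.range (d + 1), (p i : R⟦X⟧) * exp R ^ i = 0) {i : ℕ} (hi : i ≤ d) :
    p i = 0 := by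
  induction d generalizing p i with
  | zero =>
    obtain rfl := Nat.le_zero.mp hi
    simpa using h
  | succ d ih =>
    have : CharZero R := Algebra.charZero_of_charZero ℚ R
    set N := (p (d + 1)).natDegree + 1
    set T : ℕ → Module.End R (Polynomial R) :=
      fun j => (Polynomial.derivative + ((j : R) - ((d + 1 : ℕ) : R)) • 1) ^ N
    have hT : ∑ j ∈ Finset.range (d + 1 + 1), (T j (p j) : R⟦X⟧) * exp R ^ j = 0 := by
      have := congrArg
        (((d⁄dX R : R⟦X⟧ →ₗ[R] R⟦X⟧) - ((d + 1 : ℕ) : R) • 1 : Module.End R R⟦X⟧) ^ N) h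
      simpa only [map_sum, map_zero, pow_derivative_sub_smul_one_coe_mul_exp_pow] using this
    have hT_top : T (d + 1) (p (d + 1)) = 0 := by
      simp only [T, sub_self, zero_smul, add_zero, Module.End.pow_apply]
      exact Polynomial.iterate_derivative_eq_zero (Nat.lt_succ_self _)
    have hT_inj : ∀ j ≤ d, Function.Injective (T j) := fun j hj => by
      have hc : (j : R) - ((d + 1 : ℕ) : R) ≠ 0 :=
        sub_ne_zero.mpr (Nat.cast_injective.ne (by omega))
      simpa only [T, Module.End.coe_pow] using
        (Polynomial.derivative_add_smul_one_injective hc).iterate N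
    have hlow : ∀ j ≤ d, p j = 0 := fun j hj =>
      (injective_iff_map_eq_zero _).mp (hT_inj j hj) _ <|
        ih (by rwa [Finset.sum_range_succ, hT_top, Polynomial.coe_zero, zero_mul, add_zero] at hT)
          hj
    rcases Nat.le_succ_iff.mp hi with hi | rfl
    · exact hlow i hi
    · rwa [Finset.sum_range_succ, Finset.sum_eq_zero fun j hj => by
        rw [hlow j (Nat.lt_succ_iff.mp (Finset.mem_range.mp hj)), Polynomial.coe_zero, zero_mul],
        zero_add, coe_mul_exp_pow_eq_zero_iff] at h

end PowerSeries

/-- The exponential power series is not algebraic over `ℚ[X]`: no nontrivial polynomial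
relation `∑ pᵢ(X) · exp(X)^i = 0` holds in `ℚ⟦X⟧`. -/
theorem stmt3 (d : ℕ) (p : ℕ → Polynomial ℚ) (hp : ∃ i, i ≤ d ∧ p i ≠ 0) :
    ∑ i ∈ Finset.range (d + 1), (p i : PowerSeries ℚ) * (PowerSeries.exp ℚ) ^ i ≠ 0 := by
  obtain ⟨i, hi, hpi⟩ := hp
  exact fun h => hpi (eq_zero_of_sum_coe_mul_exp_pow_eq_zero h hi)
end

section
/- Define a : ℕ → ℚ by a(n) = 2·3^n·(2n)! / (n!·(n+2)!), the number of rooted planar maps with n edges (so a(0)=1, a(1)=2, a(2)=9, a(3)=54, …), and let A = ∑_{n≥0} a(n)·X^n ∈ ℚ⟦X⟧. Then (1 − 18·X + 54·X²·A)² = (1 − 12·X)³ in ℚ⟦X⟧; equivalently, A is the power series expansion of (−1 + 18z + (1 − 12z)^{3/2})/(54z²). -/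
/-!
The series `B = 1 - 18X + 54X²A` satisfies the linear differential equation
`(1 - 12X) B' = -18 B`: coefficientwise this is Tutte's recurrence
`(n + 3) a(n+1) = 6 (2n + 1) a(n)` together with two initial terms. Hence `B²` and `(1 - 12X)³`
both solve `(1 - 12X) y' = -36 y`, and a solution is determined by its constant term because the
equation reads `(n + 1) y(n+1) = (12n - 36) y(n)` on coefficients.
-/

open PowerSeries

namespace PowerSeries

variable {R : Type*} [CommRing R]

theorem coeff_one_sub_C_mul_X_mul_derivative (c : R) (y : R⟦X⟧) (n : ℕ) :
    coeff n ((1 - C c * X) * d⁄dX R y) = (n + 1) * coeff (n + 1) y - c * n * coeff n y := by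
  rw [sub_mul, one_mul, mul_assoc, map_sub, coeff_C_mul, coeff_derivative]
  cases n with
  | zero => simp
  | succ m => rw [coeff_succ_X_mul, coeff_derivative]; push_cast; ring

theorem one_sub_C_mul_X_mul_derivative_eq_iff (c d : R) (y : R⟦X⟧) :
    (1 - C c * X) * d⁄dX R y = C d * y ↔
      ∀ n : ℕ, (n + 1) * coeff (n + 1) y = (c * n + d) * coeff n y := by
  refine ⟨fun h n => ?_, fun h => ext fun n => ?_⟩
  · have hn := congrArg (coeff n) h
    rw [coeff_one_sub_C_mul_X_mul_derivative, coeff_C_mul] at hn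
    linear_combination hn
  · rw [coeff_one_sub_C_mul_X_mul_derivative, coeff_C_mul]
    linear_combination h n

theorem mul_derivative_pow {u y : R⟦X⟧} {d : R} (h : u * d⁄dX R y = C d * y) (k : ℕ) :
    u * d⁄dX R (y ^ k) = C (k * d) * y ^ k := by
  rw [Derivation.leibniz_pow, smul_eq_mul, nsmul_eq_mul, map_mul, map_natCast]
  cases k with
  | zero => simp
  | succ j =>
    calc u * ((j + 1 : ℕ) * (y ^ j * d⁄dX R y)) = (j + 1 : ℕ) * y ^ j * (u * d⁄dX R y) := by ring
      _ = _ := by rw [h, pow_succ]; ring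

theorem one_sub_C_mul_X_mul_derivative_self (c : R) :
    (1 - C c * X) * d⁄dX R (1 - C c * X) = C (-c) * (1 - C c * X) := by
  simp only [map_sub, Derivation.map_one_eq_zero, Derivation.leibniz, derivative_X,
    derivative_C, smul_eq_mul, map_neg]
  ring

theorem eq_of_one_sub_C_mul_X_mul_derivative_eq [IsDomain R] [CharZero R] {c d : R}
    {y z : R⟦X⟧} (hy : (1 - C c * X) * d⁄dX R y = C d * y)
    (hz : (1 - C c * X) * d⁄dX R z = C d * z) (h0 : constantCoeff y = constantCoeff z) :
    y = z := by
  rw [one_sub_C_mul_X_mul_derivative_eq_iff] at hy hz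
  ext n
  induction n with
  | zero => simpa using h0
  | succ m ih =>
    refine mul_left_cancel₀ (Nat.cast_add_one_ne_zero m) ?_
    rw [hy, hz, ih]

end PowerSeries

def planarMapCount (n : ℕ) : ℚ :=
  2 * 3 ^ n * ((2 * n).factorial : ℚ) / ((n.factorial : ℚ) * ((n + 2).factorial : ℚ))

theorem planarMapCount_succ (n : ℕ) :
    (n + 3) * planarMapCount (n + 1) = 6 * (2 * n + 1) * planarMapCount n := by
  simp only [planarMapCount, show 2 * (n + 1) = 2 * n + 1 + 1 by ring, Nat.factorial_succ]
  push_cast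
  field_simp
  ring

theorem one_sub_twelve_X_mul_derivative_planarMapCount :
    (1 - C 12 * X) * d⁄dX ℚ (1 - 18 * X + 54 * X ^ 2 * mk planarMapCount) =
      C (-18) * (1 - 18 * X + 54 * X ^ 2 * mk planarMapCount) := by
  set B : ℚ⟦X⟧ := 1 - 18 * X + 54 * X ^ 2 * mk planarMapCount
  have hB0 : coeff 0 B = 1 := by simp [B]
  have hB1 : coeff 1 B = -18 := by simp [B, ← map_ofNat C, coeff_one, mul_assoc, coeff_X_pow_mul']
  have hB : ∀ m, coeff (m + 2) B = 54 * planarMapCount m := by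
    intro m; simp [B, ← map_ofNat C, coeff_one, mul_assoc, coeff_X_pow_mul']
  rw [one_sub_C_mul_X_mul_derivative_eq_iff]
  rintro (_ | _ | m)
  · rw [hB1, hB0]; norm_num
  · rw [hB, hB1]; norm_num [planarMapCount]
  · rw [hB, hB m]
    push_cast
    linear_combination 54 * planarMapCount_succ m

/-- For `a n = 2·3^n·(2n)!/(n!·(n+2)!)` (rooted planar maps with `n` edges) with generating
function `A`, one has `(1 - 18X + 54X²·A)² = (1 - 12X)³` in `ℚ⟦X⟧`; i.e. `A` is the
expansion of `(-1 + 18z + (1-12z)^{3/2})/(54z²)`. -/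
theorem stmt5 (a : ℕ → ℚ)
    (ha : ∀ n : ℕ, a n =
      2 * 3 ^ n * ((2 * n).factorial : ℚ) / ((n.factorial : ℚ) * ((n + 2).factorial : ℚ))) :
    (1 - 18 * PowerSeries.X + 54 * PowerSeries.X ^ 2 * PowerSeries.mk a) ^ 2 =
      (1 - 12 * (PowerSeries.X : PowerSeries ℚ)) ^ 3 := by
  obtain rfl : a = planarMapCount := funext ha
  rw [← map_ofNat C 12]
  refine eq_of_one_sub_C_mul_X_mul_derivative_eq (c := 12) (d := -36) ?_ ?_ (by simp)
  · convert mul_derivative_pow one_sub_twelve_X_mul_derivative_planarMapCount 2 using 2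
    norm_num
  · convert mul_derivative_pow (one_sub_C_mul_X_mul_derivative_self (12 : ℚ)) 3 using 2
    norm_num
end

section
/- Let T ∈ ℚ⟦X⟧ be the power series whose 0-th coefficient is 0 and whose n-th coefficient for n ≥ 1 is n^{n−1}/n!, i.e., the exponential generating function of the sequence n^{n−1} of labeled rooted trees on n vertices. Then T satisfies the functional equation T = X·exp(T), where exp(T) denotes the composition of the exponential power series with T (well-defined since T has zero constant term). -/
/-!
Put `E = exp ∘ T` and `V = ∑ (n+1)^(n-1) X^n / n!`, so that `T = X * V`. Both `E` and `V` solve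
the linear differential equation `F' = F * T'` with `F(0) = 1`: for `E` this is the chain rule,
for `V` it is Abel's identity `∑_k C(n,k) (k+1)^(k-1) (n+1-k)^(n-k) = (n+2)^n`. Such a solution
is unique, hence `E = V` and `T = X * E`.

Abel's identity is proved as an identity of polynomials in `y`: by induction on `n` both sides
have the same derivative, and they agree at `y = -1`, where the left side becomes an
`(n+1)`-st forward difference of a polynomial of degree `n`.
-/

/-- Composition `g ∘ T` of formal power series over `ℚ`, valid (equal to the usual
substitution) when `T` has zero constant term: the `k`-th coefficient is
`∑_{n ≤ k} (coeff n g) · (coeff k (T^n))`. -/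
noncomputable def PowerSeries.comp (g T : PowerSeries ℚ) : PowerSeries ℚ :=
  PowerSeries.mk fun k =>
    ∑ n ∈ Finset.range (k + 1), PowerSeries.coeff n g * PowerSeries.coeff k (T ^ n)

open Finset

section Abel

open Polynomial

theorem Polynomial.eq_of_derivative_eq_of_eval_eq {K : Type*} [Field K] [CharZero K]
    {p q : K[X]} (a : K) (hd : derivative p = derivative q) (ha : p.eval a = q.eval a) :
    p = q := by
  have hconst : (p - q).natDegree = 0 := by
    rw [← derivative_eq_zero, derivative_sub, hd, sub_self]
  have hC := eq_C_of_natDegree_eq_zero hconst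
  have h0 : (p - q).coeff 0 = 0 := by simpa [ha] using (congrArg (eval a) hC).symm
  rw [← sub_eq_zero, hC, h0, C_0]

-- Abel's polynomial `∑ C(n,k) x (x+k)^(k-1) (y-k)^(n-k)` at `x = 1`; the truncated `k - 1` is
-- harmless at `k = 0`, where the base is `1`.
noncomputable def abelPoly (n : ℕ) : ℚ[X] :=
  ∑ k ∈ range (n + 1), C (n.choose k * ((k : ℚ) + 1) ^ (k - 1)) * (X - C (k : ℚ)) ^ (n - k)

theorem derivative_abelPoly_succ (n : ℕ) :
    derivative (abelPoly (n + 1)) = C ((n : ℚ) + 1) * abelPoly n := by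
  rw [abelPoly, abelPoly, derivative_sum, sum_range_succ, Finset.mul_sum]
  simp only [derivative_C_mul, derivative_X_sub_C_pow, Nat.sub_self, Nat.cast_zero, map_zero,
    zero_mul, mul_zero, add_zero]
  refine sum_congr rfl fun k _ => ?_
  have hchoose : ((n + 1).choose k : ℚ) * ((n + 1 - k : ℕ) : ℚ) = ((n : ℚ) + 1) * n.choose k := by
    exact_mod_cast (Nat.choose_mul_succ_eq n k).symm.trans (mul_comm _ _)
  rw [show n + 1 - k - 1 = n - k by omega, ← mul_assoc, ← C_mul, ← mul_assoc, ← C_mul]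
  congr 2
  linear_combination ((k : ℚ) + 1) ^ (k - 1) * hchoose

theorem eval_abelPoly_succ_neg_one (n : ℕ) : (abelPoly (n + 1)).eval (-1) = 0 := by
  have hΔ := congrFun (fwdDiff_iter_pow_eq_zero_of_lt (R := ℚ) (Nat.lt_succ_self n)) 1
  simp only [fwdDiff_iter_eq_sum_shift, Pi.zero_apply, nsmul_one, zsmul_eq_mul] at hΔ
  rw [abelPoly, eval_finsetSum, ← hΔ]
  refine sum_congr rfl fun k hk => ?_
  have hkn : k ≤ n + 1 := Nat.lt_succ_iff.mp (mem_range.mp hk)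
  have hpow : ((k : ℚ) + 1) ^ (k - 1) * ((k : ℚ) + 1) ^ (n + 1 - k) = ((k : ℚ) + 1) ^ n := by
    rcases k with _ | k
    · simp
    · rw [← pow_add]; congr 1; omega
  simp only [eval_mul, eval_C, eval_pow, eval_sub, eval_X]
  rw [show (-1 : ℚ) - k = (-1) * ((k : ℚ) + 1) by ring, mul_pow, add_comm 1 (k : ℚ), ← hpow]
  push_cast
  ring

theorem abelPoly_eq (n : ℕ) : abelPoly n = (X + 1) ^ n := by
  induction n with
  | zero => simp [abelPoly]
  | succ n ih =>
    refine eq_of_derivative_eq_of_eval_eq (-1) ?_ ?_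
    · rw [derivative_abelPoly_succ, ih, ← C_1, derivative_X_add_C_pow]
      simp
    · simp [eval_abelPoly_succ_neg_one]

theorem abel_identity (n : ℕ) (y : ℚ) :
    ∑ k ∈ range (n + 1), n.choose k * ((k : ℚ) + 1) ^ (k - 1) * (y - k) ^ (n - k) = (y + 1) ^ n := by
  simpa [abelPoly, eval_finsetSum] using congrArg (eval y) (abelPoly_eq n)

end Abel

namespace PowerSeries

open Nat

section EGF

variable {K : Type*} [Field K]

noncomputable def egf (a : ℕ → K) : K⟦X⟧ := mk fun n => a n / n !

theorem coeff_egf (a : ℕ → K) (n : ℕ) : coeff n (egf a) = a n / n ! := coeff_mk _ _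

theorem derivative_egf [CharZero K] (a : ℕ → K) : d⁄dX K (egf a) = egf fun n => a (n + 1) := by
  ext n
  rw [coeff_derivative, coeff_egf, coeff_egf, factorial_succ]
  push_cast
  field_simp

theorem egf_mul_egf [CharZero K] (a b : ℕ → K) :
    egf a * egf b = egf fun n => ∑ k ∈ range (n + 1), n.choose k * a k * b (n - k) := by
  ext n
  rw [coeff_mul, Nat.sum_antidiagonal_eq_sum_range_succ_mk, coeff_egf, sum_div]
  refine sum_congr rfl fun k hk => ?_
  have hn : (n ! : K) ≠ 0 := Nat.cast_ne_zero.mpr n.factorial_ne_zero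
  rw [coeff_egf, coeff_egf, cast_choose K (Nat.lt_succ_iff.mp (mem_range.mp hk))]
  field_simp

end EGF

theorem eq_zero_of_derivative_eq_mul {R : Type*} [CommRing R] [IsAddTorsionFree R]
    {u g : R⟦X⟧} (hu : d⁄dX R u = u * g) (h0 : constantCoeff u = 0) : u = 0 := by
  ext n
  rw [map_zero]
  induction n using Nat.strong_induction_on with
  | _ n ih =>
    rcases n with _ | n
    · simpa using h0
    have hcoeff : coeff n (d⁄dX R u) = 0 := by
      rw [hu, coeff_mul]
      exact sum_eq_zero fun p hp =>
        by rw [ih p.1 (by have := mem_antidiagonal.mp hp; omega), zero_mul]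
    rw [coeff_derivative, ← Nat.cast_succ, ← nsmul_eq_mul', ← nsmul_zero (n + 1)] at hcoeff
    exact (smul_right_inj (Nat.succ_ne_zero n)).mp hcoeff

theorem eq_of_derivative_eq_mul {R : Type*} [CommRing R] [IsAddTorsionFree R]
    {f h g : R⟦X⟧} (hf : d⁄dX R f = f * g) (hh : d⁄dX R h = h * g)
    (h0 : constantCoeff f = constantCoeff h) : f = h :=
  sub_eq_zero.mp <| eq_zero_of_derivative_eq_mul (g := g)
    (by rw [map_sub, hf, hh, sub_mul]) (by rw [map_sub, h0, sub_self])

theorem coeff_pow_eq_zero_of_lt {R : Type*} [CommSemiring R] {T : R⟦X⟧}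
    (hT : constantCoeff T = 0) {k d : ℕ} (hkd : k < d) : coeff k (T ^ d) = 0 :=
  X_pow_dvd_iff.mp (pow_dvd_pow_of_dvd (X_dvd_iff.mpr hT) d) k hkd

theorem comp_eq_subst {g T : ℚ⟦X⟧} (hT : constantCoeff T = 0) : comp g T = g.subst T := by
  ext k
  rw [coeff_subst' (HasSubst.of_constantCoeff_zero' hT),
    finsum_eq_sum_of_support_subset (s := range (k + 1)), comp, coeff_mk]
  · rfl
  · intro d hd
    by_contra hdk
    exact hd (by simp [coeff_pow_eq_zero_of_lt hT (by simpa using hdk)])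

theorem constantCoeff_comp (g T : ℚ⟦X⟧) : constantCoeff (comp g T) = constantCoeff g := by
  rw [← coeff_zero_eq_constantCoeff_apply, ← coeff_zero_eq_constantCoeff_apply, comp, coeff_mk]
  simp

theorem derivative_comp_exp {T : ℚ⟦X⟧} (hT : constantCoeff T = 0) :
    d⁄dX ℚ (comp (exp ℚ) T) = comp (exp ℚ) T * d⁄dX ℚ T := by
  rw [comp_eq_subst hT, derivative_subst (HasSubst.of_constantCoeff_zero' hT), derivative_exp]

theorem derivative_egf_add_one_pow_pred :
    d⁄dX ℚ (egf fun n => ((n : ℚ) + 1) ^ (n - 1)) =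
      (egf fun n => ((n : ℚ) + 1) ^ (n - 1)) * egf fun n => ((n : ℚ) + 1) ^ n := by
  rw [derivative_egf, egf_mul_egf]
  congr 1
  funext n
  rw [Nat.add_sub_cancel, show ((n + 1 : ℕ) : ℚ) + 1 = (n + 1 : ℚ) + 1 by push_cast; rfl,
    ← abel_identity n (n + 1)]
  refine sum_congr rfl fun k hk => ?_
  rw [Nat.cast_sub (Nat.lt_succ_iff.mp (mem_range.mp hk))]
  ring_nf

section TreeFunction

variable {T : ℚ⟦X⟧}
  (hT : ∀ n : ℕ, coeff n T = if n = 0 then 0 else (n : ℚ) ^ (n - 1) / (n ! : ℚ))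
include hT

theorem derivative_eq_egf_add_one_pow : d⁄dX ℚ T = egf fun n => ((n : ℚ) + 1) ^ n := by
  ext n
  rw [coeff_derivative, hT, if_neg n.succ_ne_zero, coeff_egf, factorial_succ]
  push_cast
  field_simp

theorem eq_X_mul_egf_add_one_pow_pred : T = X * egf fun n => ((n : ℚ) + 1) ^ (n - 1) := by
  ext n
  rcases n with _ | n
  · simp [hT]
  rw [coeff_succ_X_mul, hT, if_neg n.succ_ne_zero, coeff_egf]
  rcases n with _ | n
  · simp
  rw [factorial_succ (n + 1)]
  push_cast
  field_simp
  ring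

end TreeFunction

end PowerSeries

/-- The tree function `T = ∑_{n≥1} n^{n-1} X^n / n!` (EGF of labeled rooted trees)
satisfies the functional equation `T = X · exp(T)`. -/
theorem stmt6 (T : PowerSeries ℚ)
    (hT : ∀ n : ℕ, PowerSeries.coeff n T =
      if n = 0 then 0 else (n : ℚ) ^ (n - 1) / (n.factorial : ℚ)) :
    T = PowerSeries.X * PowerSeries.comp (PowerSeries.exp ℚ) T := by
  have hT0 : PowerSeries.constantCoeff T = 0 := by
    simpa using hT 0
  have hexp : PowerSeries.comp (PowerSeries.exp ℚ) T =
      PowerSeries.egf fun n => ((n : ℚ) + 1) ^ (n - 1) := by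
    refine PowerSeries.eq_of_derivative_eq_mul (PowerSeries.derivative_comp_exp hT0) ?_ ?_
    · rw [PowerSeries.derivative_eq_egf_add_one_pow hT]
      exact PowerSeries.derivative_egf_add_one_pow_pred
    · rw [PowerSeries.constantCoeff_comp, PowerSeries.constantCoeff_exp,
        ← PowerSeries.coeff_zero_eq_constantCoeff_apply, PowerSeries.coeff_egf]
      simp
  rw [hexp]
  exact PowerSeries.eq_X_mul_egf_add_one_pow_pred hT
end

section
/- Let a(n) = ∑_{k=0}^{n} (number of surjective functions from Fin n onto Fin k), the number of preferential arrangements (ordered set partitions) of an n-element set (so a(0)=1, a(1)=1, a(2)=3, a(3)=13, a(4)=75, a(5)=541, …). Then, as formal power series over ℚ, (2 − exp(X)) · ∑_{n≥0} a(n)·X^n/n! = 1; equivalently, the exponential generating function of a(n) is 1/(2 − e^X). -/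
/-!
Write `S(n, k)` for the number of surjections `Fin n → Fin k`. A surjection
`Fin n → Option (Fin k)` is the same as a proper subset `t` (the points not sent to `none`)
together with a surjection `t → Fin k`; adding the missing term `t = univ` gives
`S(n, k + 1) + S(n, k) = ∑ t, S(#t, k) = ∑ j, C(n, j) S(j, k)`. Summing over `k` turns this into
`2 a(n) = ∑ j, C(n, j) a(j) + 0 ^ n`, which is the coefficientwise form of
`2 A - exp(X) A = 1` for the exponential generating function `A` of `a`.
-/

open Finset Function PowerSeries

section Surjections

variable {α β : Type*}

theorem Nat.card_surjective_congr {α' β' : Type*} (e₁ : α ≃ α') (e₂ : β ≃ β') :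
    Nat.card {f : α → β // Surjective f} = Nat.card {f : α' → β' // Surjective f} :=
  Nat.card_congr <| (e₁.arrowCongr e₂).subtypeEquiv fun f => by
    show Surjective f ↔ Surjective (e₂ ∘ f ∘ e₁.symm)
    rw [Equiv.comp_surjective, Equiv.surjective_comp]

variable [Fintype α]

def domainOf (f : α → Option β) : Finset α := univ.filter fun i => (f i).isSome

theorem mem_domainOf {f : α → Option β} {i : α} : i ∈ domainOf f ↔ (f i).isSome := by
  simp [domainOf]

variable [DecidableEq α]

def surjectiveOptionFiberEquiv (t : Finset α) (ht : t ≠ univ) :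
    {F : {f : α → Option β // Surjective f} // domainOf F.1 = t} ≃
      {g : t → β // Surjective g} where
  toFun F := ⟨fun x => (F.1.1 x).get (by rw [← mem_domainOf, F.2]; exact x.2), fun b => by
    obtain ⟨i, hi⟩ := F.1.2 (some b)
    have hit : i ∈ t := F.2 ▸ mem_domainOf.2 (by simp [hi])
    exact ⟨⟨i, hit⟩, by simp [hi]⟩⟩
  invFun G := ⟨⟨fun i => if h : i ∈ t then some (G.1 ⟨i, h⟩) else none, fun
      | none => by
        obtain ⟨i, hi⟩ : ∃ i, i ∉ t := by simpa [eq_univ_iff_forall] using ht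
        exact ⟨i, by simp [hi]⟩
      | some b => by
        obtain ⟨x, hx⟩ := G.2 b
        exact ⟨x, by simp [hx]⟩⟩, by
    ext i
    by_cases hi : i ∈ t <;> simp [mem_domainOf, hi]⟩
  left_inv F := by
    ext i : 3
    by_cases hi : i ∈ t
    · simp [hi]
    · have : ¬ (F.1.1 i).isSome := fun h => hi (F.2 ▸ mem_domainOf.2 h)
      simp_all
  right_inv G := by ext; simp

theorem Nat.card_surjective_option [Finite β] :
    Nat.card {f : α → Option β // Surjective f} =
      ∑ t ∈ (univ : Finset (Finset α)).erase univ,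
        Nat.card {g : t → β // Surjective g} := by
  rw [← Nat.card_congr (Equiv.sigmaFiberEquiv fun F : {f : α → Option β // Surjective f} =>
    domainOf F.1), Nat.card_sigma, ← add_sum_erase _ _ (mem_univ univ)]
  have : IsEmpty {F : {f : α → Option β // Surjective f} // domainOf F.1 = univ} := by
    refine ⟨fun ⟨F, hF⟩ => ?_⟩
    obtain ⟨i, hi⟩ := F.2 none
    have := mem_domainOf.1 (hF ▸ mem_univ i : i ∈ domainOf F.1)
    simp [hi] at this
  rw [Nat.card_of_isEmpty, zero_add]
  exact sum_congr rfl fun t ht =>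
    Nat.card_congr (surjectiveOptionFiberEquiv t (ne_of_mem_erase ht))

end Surjections

noncomputable def surjCard (n k : ℕ) : ℕ := Nat.card {f : Fin n → Fin k // Surjective f}

theorem Nat.card_surjective_eq_surjCard {α β : Type*} [Fintype α] [Fintype β] :
    Nat.card {f : α → β // Surjective f} = surjCard (Fintype.card α) (Fintype.card β) :=
  Nat.card_surjective_congr (Fintype.equivFin α) (Fintype.equivFin β)

theorem surjCard_succ_add (n k : ℕ) :
    surjCard n (k + 1) + surjCard n k = ∑ j ∈ range (n + 1), n.choose j * surjCard j k := by
  have hlast : surjCard n (k + 1) =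
      Nat.card {f : Fin n → Option (Fin k) // Surjective f} :=
    Nat.card_surjective_congr (Equiv.refl _) finSuccEquivLast
  have hself : surjCard n k = Nat.card {g : ↥(univ : Finset (Fin n)) → Fin k // Surjective g} :=
    Nat.card_surjective_congr (Equiv.subtypeUnivEquiv mem_univ).symm (Equiv.refl _)
  rw [hlast, Nat.card_surjective_option, hself, sum_erase_add _ _ (mem_univ _)]
  simp_rw [Nat.card_surjective_eq_surjCard, Fintype.card_coe, Fintype.card_fin]
  rw [← powerset_univ, sum_powerset_apply_card (fun m => surjCard m k), card_univ,
    Fintype.card_fin]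
  simp only [smul_eq_mul]

theorem surjCard_eq_zero_of_lt {n k : ℕ} (h : n < k) : surjCard n k = 0 := by
  rw [surjCard, Nat.card_eq_zero]
  left
  exact ⟨fun ⟨f, hf⟩ => h.not_ge (by simpa using Fintype.card_le_of_surjective f hf)⟩

theorem surjCard_zero_right (n : ℕ) : surjCard n 0 = 0 ^ n := by
  rw [surjCard, Nat.card_congr (Equiv.subtypeUnivEquiv fun f => isEmptyElim), Nat.card_fun]
  simp

noncomputable def orderedBell (n : ℕ) : ℕ := ∑ k ∈ range (n + 1), surjCard n k

theorem sum_range_surjCard_of_le {n m : ℕ} (h : n ≤ m) :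
    ∑ k ∈ range (m + 1), surjCard n k = orderedBell n :=
  (sum_subset (range_subset_range.2 (by omega)) fun _ _ hk =>
    surjCard_eq_zero_of_lt (by simp at hk; omega)).symm

theorem two_mul_orderedBell (n : ℕ) :
    2 * orderedBell n = ∑ j ∈ range (n + 1), n.choose j * orderedBell j + 0 ^ n := by
  have hshift : ∑ k ∈ range (n + 1), surjCard n (k + 1) + 0 ^ n = orderedBell n := by
    rw [← surjCard_zero_right, ← sum_range_succ', sum_range_succ,
      surjCard_eq_zero_of_lt (Nat.lt_succ_self n), add_zero, orderedBell]
  have hconv : ∑ k ∈ range (n + 1), (surjCard n (k + 1) + surjCard n k) =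
      ∑ j ∈ range (n + 1), n.choose j * orderedBell j := by
    rw [sum_congr rfl fun k _ => surjCard_succ_add n k, sum_comm]
    simp_rw [← mul_sum]
    exact sum_congr rfl fun j hj => by rw [sum_range_surjCard_of_le (by simp at hj; omega)]
  rw [sum_add_distrib, ← orderedBell] at hconv
  omega

theorem coeff_mk_mul_exp {K : Type*} [Field K] [CharZero K] (a : ℕ → K) (n : ℕ) :
    coeff n (mk (fun n => a n / n.factorial) * exp K) =
      (∑ j ∈ range (n + 1), n.choose j * a j) / n.factorial := by
  rw [coeff_mul, Nat.sum_antidiagonal_eq_sum_range_succ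
    (fun i j => coeff i (mk fun n => a n / n.factorial) * coeff j (exp K)), sum_div]
  refine sum_congr rfl fun j hj => ?_
  rw [coeff_mk, coeff_exp, Nat.cast_choose K (by simp at hj; omega)]
  simp only [map_div₀, map_one, map_natCast]
  field_simp
  rw [mul_div_mul_right _ _ (Nat.cast_ne_zero.2 n.factorial_ne_zero)]

theorem two_sub_exp_mul_egf_orderedBell {K : Type*} [Field K] [CharZero K] :
    (2 - exp K) * mk (fun n => (orderedBell n : K) / n.factorial) = 1 := by
  ext n
  have hrec := congrArg (Nat.cast : ℕ → K) (two_mul_orderedBell n)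
  push_cast at hrec
  rw [sub_mul, map_sub, mul_comm (exp K), coeff_mk_mul_exp, two_mul, map_add, coeff_mk,
    ← add_div, ← sub_div, ← two_mul, hrec, add_sub_cancel_left, coeff_one]
  cases n <;> simp

/-- The exponential generating function of the numbers of preferential arrangements
(ordered set partitions) `a n = ∑_{k ≤ n} #{surjections (Fin n) ↠ (Fin k)}`
is `1 / (2 - exp X)`. -/
theorem stmt11 (a : ℕ → ℕ)
    (ha : ∀ n : ℕ, a n =
      ∑ k ∈ Finset.range (n + 1), Nat.card {f : Fin n → Fin k // Function.Surjective f}) :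
    (2 - PowerSeries.exp ℚ) * (PowerSeries.mk fun n => (a n : ℚ) / (n.factorial : ℚ)) = 1 := by
  obtain rfl : a = orderedBell := funext ha
  exact two_sub_exp_mul_egf_orderedBell
end

section
/- For every natural number n, ∑_{k=0}^{n} C(2k, k) · C(2(n−k), n−k) = 4^n, where C(m, j) denotes the binomial coefficient. Equivalently, the generating function ∑_{n≥0} C(2n,n)·z^n of the central binomial coefficients squares to 1/(1 − 4z): (1 − 4X)·(∑_{n≥0} C(2n,n)·X^n)² = 1 in ℤ⟦X⟧. -/
/-!
The series `f = ∑ C(2n,n) Xⁿ` satisfies `(1 - 4X) f' = 2f`, which is the recurrence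
`(n+1) C(2n+2,n+1) = 2(2n+1) C(2n,n)` read coefficientwise. Hence `(1 - 4X) f²` has derivative
`-4f² + 2(1 - 4X) f f' = 0` and constant term `1`, so it equals `1`. As `1 - 4X` is also inverted by
`∑ 4ⁿ Xⁿ`, this gives `f² = ∑ 4ⁿ Xⁿ`, whose coefficients are the convolution identity.
-/

open Finset

namespace PowerSeries

variable (R : Type*) [CommRing R]

noncomputable def centralBinomSeries : R⟦X⟧ := mk fun n => (n.centralBinom : R)

theorem one_sub_four_X_mul_derivative_centralBinomSeries :
    (1 - 4 * X) * d⁄dX R (centralBinomSeries R) = 2 * centralBinomSeries R := by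
  ext n
  have hrec : ((n + 1 : ℕ) * (n + 1).centralBinom : R) = 2 * (2 * n + 1) * n.centralBinom := by
    exact_mod_cast congrArg (Nat.cast (R := R)) (Nat.succ_mul_centralBinom_succ n)
  rw [← map_ofNat C 4, ← map_ofNat C 2, sub_mul, one_mul, mul_assoc, map_sub, coeff_C_mul,
    coeff_C_mul]
  rcases n with _ | n <;>
  · simp only [coeff_derivative, centralBinomSeries, coeff_mk, coeff_zero_X_mul,
      coeff_succ_X_mul] at hrec ⊢
    push_cast at hrec ⊢
    linear_combination hrec

theorem one_sub_four_X_mul_centralBinomSeries_sq [IsAddTorsionFree R] :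
    (1 - 4 * X) * centralBinomSeries R ^ 2 = 1 := by
  apply derivative.ext
  · have hode := one_sub_four_X_mul_derivative_centralBinomSeries R
    have hlin : d⁄dX R (1 - 4 * X) = -4 := by
      rw [← map_ofNat C 4]
      simp
    rw [derivative_one, Derivation.leibniz, Derivation.leibniz_pow, hlin, smul_eq_mul,
      smul_eq_mul, nsmul_eq_mul]
    linear_combination (2 * centralBinomSeries R) * hode
  · simp [centralBinomSeries]

theorem one_sub_four_X_mul_mk_four_pow : (1 - 4 * X) * mk (fun n => (4 : R) ^ n) = 1 := by
  have := congrArg (rescale (4 : R)) (mk_one_mul_one_sub_eq_one (S := R))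
  rw [map_mul, map_sub, map_one, rescale_X, rescale_mk, map_ofNat, mul_comm] at this
  simpa only [Pi.one_apply, mul_one] using this

theorem centralBinomSeries_sq [IsAddTorsionFree R] :
    centralBinomSeries R ^ 2 = mk fun n => (4 : R) ^ n :=
  left_inv_eq_right_inv (by rw [mul_comm, one_sub_four_X_mul_centralBinomSeries_sq])
    (one_sub_four_X_mul_mk_four_pow R)

end PowerSeries

theorem Nat.sum_range_centralBinom_mul_centralBinom (n : ℕ) :
    ∑ k ∈ range (n + 1), k.centralBinom * (n - k).centralBinom = 4 ^ n := by
  have hcoeff := congrArg (PowerSeries.coeff n) (PowerSeries.centralBinomSeries_sq ℤ)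
  rw [sq, PowerSeries.coeff_mul, Finset.Nat.sum_antidiagonal_eq_sum_range_succ_mk] at hcoeff
  simp only [PowerSeries.centralBinomSeries, PowerSeries.coeff_mk] at hcoeff
  exact_mod_cast hcoeff

/-- `∑_{k=0}^{n} C(2k,k)·C(2(n-k),n-k) = 4^n`; equivalently the generating function of the
central binomial coefficients squares to `1/(1-4z)`. -/
theorem stmt12 :
    (∀ n : ℕ, ∑ k ∈ Finset.range (n + 1),
        (2 * k).choose k * (2 * (n - k)).choose (n - k) = 4 ^ n) ∧
      (1 - 4 * PowerSeries.X) *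
        (PowerSeries.mk fun n => ((2 * n).choose n : ℤ)) ^ 2 = 1 :=
  ⟨Nat.sum_range_centralBinom_mul_centralBinom,
    PowerSeries.one_sub_four_X_mul_centralBinomSeries_sq ℤ⟩
end

section
/- Let D(n) = ∑_{k=0}^{n} C(n, k) · C(n+k, k) be the n-th central Delannoy number (D(0)=1, D(1)=3, D(2)=13, D(3)=63, D(4)=321, …), and let D = ∑_{n≥0} D(n)·X^n ∈ ℤ⟦X⟧. Then D² · (1 − 6X + X²) = 1 in ℤ⟦X⟧; equivalently, the generating function of the central Delannoy numbers is 1/√(1 − 6z + z²). -/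
/-!
Write `F(n,k) = C(n,k)·C(n+k,k)`. Since `F` is hypergeometric in both variables, one checks that
`(n+2)F(n+2,k+1) - (6n+9)F(n+1,k+1) + (n+1)F(n,k+1) = G(k) - G(k+1)` with `G(k) = (4n+6)F(n+1,k)`.
Summing over `k` telescopes to the recurrence `(n+2)D(n+2) = (6n+9)D(n+1) - (n+1)D(n)`, with
`D(1) = 3D(0)`, which is the coefficientwise form of the differential equation
`(1 - 6X + X²)D' = (3 - X)D`. Hence `(D²(1 - 6X + X²))' = 0`, and as the constant term is `1`,
`D²(1 - 6X + X²) = 1`.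
-/

open Finset PowerSeries

section ChooseCast

variable {R : Type*} [Ring R]

theorem Nat.cast_choose_mul_cast_sub (m k : ℕ) :
    (m.choose k : R) * ((m - k : ℕ) : R) = m.choose k * ((m : R) - k) := by
  rcases le_or_gt k m with h | h
  · rw [Nat.cast_sub h]
  · simp [Nat.choose_eq_zero_of_lt h]

theorem Nat.cast_choose_succ_right_mul (m k : ℕ) :
    (m.choose (k + 1) : R) * (k + 1) = m.choose k * ((m : R) - k) := by
  rw [← Nat.cast_choose_mul_cast_sub]
  exact_mod_cast congrArg (Nat.cast : ℕ → R) (Nat.choose_succ_right_eq m k)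

theorem Nat.cast_choose_mul_succ (m k : ℕ) :
    (m.choose k : R) * (m + 1) = (m + 1).choose k * ((m : R) + 1 - k) := by
  have h := Nat.cast_choose_mul_cast_sub (R := R) (m + 1) k
  push_cast at h
  rw [← h]
  exact_mod_cast congrArg (Nat.cast : ℕ → R) (Nat.choose_mul_succ_eq m k)

end ChooseCast

def delannoyTerm (n k : ℕ) : ℤ := n.choose k * (n + k).choose k

def centralDelannoy (n : ℕ) : ℤ := ∑ k ∈ range (n + 1), delannoyTerm n k

@[simp]
theorem delannoyTerm_zero_right (n : ℕ) : delannoyTerm n 0 = 1 := by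
  simp [delannoyTerm]

theorem delannoyTerm_eq_zero_of_lt {n k : ℕ} (h : n < k) : delannoyTerm n k = 0 := by
  simp [delannoyTerm, Nat.choose_eq_zero_of_lt h]

theorem delannoyTerm_succ_succ_mul_sq (m k : ℕ) :
    delannoyTerm (m + 1) (k + 1) * (k + 1) ^ 2 = delannoyTerm m k * (m + k + 1) * (m + k + 2) := by
  have h₁ : ((m + 1 : ℕ) : ℤ) * m.choose k = (m + 1).choose (k + 1) * (k + 1) := by
    exact_mod_cast Nat.add_one_mul_choose_eq m k
  have h₂ : ((m + k + 2 : ℕ) : ℤ) * (m + k + 1).choose k = (m + k + 2).choose (k + 1) * (k + 1) := by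
    exact_mod_cast Nat.add_one_mul_choose_eq (m + k + 1) k
  have h₃ := Nat.cast_choose_mul_succ (R := ℤ) (m + k) k
  unfold delannoyTerm
  rw [show m + 1 + (k + 1) = m + k + 2 by ring]
  push_cast at h₁ h₂ h₃ ⊢
  linear_combination (-((m + k + 2).choose (k + 1) * (k + 1) : ℤ)) * h₁
    - ((m : ℤ) + 1) * m.choose k * h₂ - m.choose k * ((m : ℤ) + k + 2) * h₃

theorem delannoyTerm_succ_right_mul_sq (m k : ℕ) :
    delannoyTerm m (k + 1) * (k + 1) ^ 2 = delannoyTerm m k * (m - k) * (m + k + 1) := by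
  have h₁ := Nat.cast_choose_succ_right_mul (R := ℤ) m k
  have h₂ : ((m + k + 1 : ℕ) : ℤ) * (m + k).choose k = (m + k + 1).choose (k + 1) * (k + 1) := by
    exact_mod_cast Nat.add_one_mul_choose_eq (m + k) k
  unfold delannoyTerm
  rw [show m + (k + 1) = m + k + 1 by ring]
  push_cast at h₂
  linear_combination ((m + k + 1).choose (k + 1) : ℤ) * (k + 1) * h₁
    - (m.choose k : ℤ) * ((m : ℤ) - k) * h₂

theorem delannoyTerm_succ_right_mul_sq_eq_succ_left (m k : ℕ) :
    delannoyTerm m (k + 1) * (k + 1) ^ 2 = delannoyTerm (m + 1) k * (m - k) * (m + 1 - k) := by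
  have h₁ := Nat.cast_choose_succ_right_mul (R := ℤ) m k
  have h₂ := Nat.cast_choose_succ_right_mul (R := ℤ) (m + k + 1) k
  have h₃ := Nat.cast_choose_mul_succ (R := ℤ) m k
  unfold delannoyTerm
  rw [show m + (k + 1) = m + k + 1 by ring, show m + 1 + k = m + k + 1 by ring]
  push_cast at h₂
  linear_combination ((m + k + 1).choose (k + 1) : ℤ) * (k + 1) * h₁
    + (m.choose k : ℤ) * ((m : ℤ) - k) * h₂ + ((m + k + 1).choose k : ℤ) * ((m : ℤ) - k) * h₃

-- Multiplied by `(k+1)²`, every term is a polynomial multiple of `F(n+1,k)`. The certificate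
-- `(4n+6)F(n+1,k)` is the one Zeilberger's algorithm produces.
theorem delannoyTerm_telescope (n k : ℕ) :
    (n + 2) * delannoyTerm (n + 2) (k + 1) - (6 * n + 9) * delannoyTerm (n + 1) (k + 1)
      + (n + 1) * delannoyTerm n (k + 1)
      = (4 * n + 6) * (delannoyTerm (n + 1) k - delannoyTerm (n + 1) (k + 1)) := by
  have h₁ := delannoyTerm_succ_succ_mul_sq (n + 1) k
  have h₂ := delannoyTerm_succ_right_mul_sq (n + 1) k
  have h₃ := delannoyTerm_succ_right_mul_sq_eq_succ_left n k
  push_cast at h₁ h₂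
  refine mul_right_cancel₀ (pow_ne_zero 2 (Nat.cast_add_one_ne_zero k : ((k : ℤ) + 1) ≠ 0)) ?_
  linear_combination ((n : ℤ) + 2) * h₁ - (6 * (n : ℤ) + 9) * h₂ + ((n : ℤ) + 1) * h₃
    + (4 * (n : ℤ) + 6) * h₂

theorem centralDelannoy_eq_sum_range {n N : ℕ} (h : n < N) :
    centralDelannoy n = ∑ k ∈ range N, delannoyTerm n k :=
  sum_subset (range_subset_range.2 h) fun _ _ hk =>
    delannoyTerm_eq_zero_of_lt (by simpa using hk)

theorem centralDelannoy_recurrence (n : ℕ) :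
    (n + 2) * centralDelannoy (n + 2)
      = (6 * n + 9) * centralDelannoy (n + 1) - (n + 1) * centralDelannoy n := by
  let g k := (4 * (n : ℤ) + 6) * delannoyTerm (n + 1) k
  have htele : ∑ k ∈ range (n + 2), (g k - g (k + 1)) = g 0 - g (n + 2) := sum_range_sub' g _
  simp only [g, ← mul_sub, ← delannoyTerm_telescope, sum_add_distrib, sum_sub_distrib, ← mul_sum,
    delannoyTerm_zero_right, delannoyTerm_eq_zero_of_lt (show n + 1 < n + 2 by omega)] at htele
  rw [centralDelannoy_eq_sum_range (show n + 1 < n + 3 by omega),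
    centralDelannoy_eq_sum_range (show n < n + 3 by omega), centralDelannoy,
    sum_range_succ' _ (n + 2), sum_range_succ' _ (n + 2), sum_range_succ' _ (n + 2)]
  simp only [delannoyTerm_zero_right]
  linear_combination htele

theorem PowerSeries.derivative_mk_mul_eq_of_recurrence {R : Type*} [CommRing R] (a : ℕ → R)
    (h₁ : a 1 = 3 * a 0)
    (hrec : ∀ n : ℕ, (n + 2) * a (n + 2) = (6 * n + 9) * a (n + 1) - (n + 1) * a n) :
    d⁄dX R (mk a) * (1 - 6 * X + X ^ 2) = (3 - X) * mk a := by
  rw [← map_ofNat C 6, ← map_ofNat C 3,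
    show d⁄dX R (mk a) * (1 - C 6 * X + X ^ 2)
      = d⁄dX R (mk a) - C 6 * (d⁄dX R (mk a) * X) + d⁄dX R (mk a) * X * X by ring,
    show (C 3 - X) * mk a = C 3 * mk a - mk a * X by ring]
  ext (_ | _ | n) <;>
    simp only [map_add, map_sub, coeff_C_mul, coeff_succ_mul_X, coeff_zero_mul_X,
      coeff_derivative, coeff_mk, Nat.cast_add, Nat.cast_one]
  · linear_combination h₁
  · linear_combination hrec 0
  · have h := hrec (n + 1)
    push_cast at h
    linear_combination h

theorem PowerSeries.sq_mul_eq_one_of_derivative {R : Type*} [CommRing R] [IsAddTorsionFree R]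
    {f q : R⟦X⟧} (hderiv : 2 * d⁄dX R f * q + f * d⁄dX R q = 0)
    (hconst : constantCoeff f ^ 2 * constantCoeff q = 1) : f ^ 2 * q = 1 := by
  refine derivative.ext ?_ (by simpa using hconst)
  rw [derivative_one, Derivation.leibniz, Derivation.leibniz_pow]
  simp only [smul_eq_mul]
  linear_combination f * hderiv

/-- The generating function `D` of the central Delannoy numbers
`D(n) = ∑_{k≤n} C(n,k)·C(n+k,k)` satisfies `D² · (1 - 6X + X²) = 1`, i.e. it equals
`1/√(1 - 6z + z²)`. -/
theorem stmt13 (D : ℕ → ℤ)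
    (hD : ∀ n : ℕ, D n = ∑ k ∈ Finset.range (n + 1), (n.choose k : ℤ) * ((n + k).choose k : ℤ)) :
    (PowerSeries.mk fun n => D n) ^ 2 *
      (1 - 6 * PowerSeries.X + PowerSeries.X ^ 2) = 1 := by
  obtain rfl : D = centralDelannoy := funext hD
  have hode := derivative_mk_mul_eq_of_recurrence centralDelannoy (by decide)
    centralDelannoy_recurrence
  have hq : d⁄dX ℤ (1 - 6 * X + X ^ 2 : ℤ⟦X⟧) = 2 * X - 6 := by
    rw [← map_ofNat C 6]
    simp only [map_add, map_sub, derivative_one, Derivation.leibniz, derivative_C, derivative_X,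
      Derivation.leibniz_pow, smul_eq_mul, nsmul_eq_mul]
    rw [map_ofNat]
    ring
  refine sq_mul_eq_one_of_derivative ?_ (by simp [centralDelannoy])
  rw [hq]
  linear_combination 2 * hode
end

section
/- Let A(n) = ∑_{k=0}^{n} C(n, k)² · C(n+k, k)² be the n-th Apéry number for ζ(3) (A(0)=1, A(1)=5, A(2)=73, A(3)=1445, …). Then for every n ≥ 2, n³·A(n) = (34n³ − 51n² + 27n − 5)·A(n−1) − (n−1)³·A(n−2), all terms being integers. -/
open Finset

/-- `F(m,k) = C(m,k)²·C(m+k,k)²` over `ℚ`. -/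
def apFq (m k : ℕ) : ℚ := ((m.choose k : ℚ)) ^ 2 * (((m + k).choose k : ℚ)) ^ 2

/-- The Zeilberger certificate polynomial. -/
def apN (x y : ℚ) : ℚ :=
  16*x*y^2 + 24*y^2 - 24*x*y - 36*y - 32*x^3 - 144*x^2 - 208*x - 96

/-- The telescoping certificate function. -/
def apG (n k : ℕ) : ℚ :=
  (k : ℚ)^4 * apN (n : ℚ) (k : ℚ) * (((n+2).choose k : ℚ))^2 * (((n+k).choose k : ℚ))^2
    / (((n : ℚ) + 1)^2 * ((n : ℚ) + 2)^2)

lemma ap_row (m k : ℕ) (h : k ≤ m + 1) :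
    (m.choose k : ℚ) * ((m : ℚ) + 1) = ((m : ℚ) + 1 - (k : ℚ)) * ((m+1).choose k : ℚ) := by
  have h0 := Nat.choose_mul_succ_eq m k
  have h1 : ((m + 1 - k : ℕ) : ℚ) = (m : ℚ) + 1 - (k : ℚ) := by
    push_cast [Nat.cast_sub h]; ring
  have h2 : ((m.choose k * (m+1) : ℕ) : ℚ) = (((m+1).choose k * (m + 1 - k) : ℕ) : ℚ) := by
    exact_mod_cast congrArg (Nat.cast : ℕ → ℚ) h0
  push_cast at h2
  rw [h1] at h2
  linarith [h2]

lemma ap_col (m k : ℕ) (h : k ≤ m) :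
    (m.choose (k+1) : ℚ) * ((k : ℚ) + 1) = ((m : ℚ) - (k : ℚ)) * (m.choose k : ℚ) := by
  have h0 := Nat.choose_succ_right_eq m k
  have h1 : ((m - k : ℕ) : ℚ) = (m : ℚ) - (k : ℚ) := by
    push_cast [Nat.cast_sub h]; ring
  have h2 : ((m.choose (k+1) * (k+1) : ℕ) : ℚ) = ((m.choose k * (m - k) : ℕ) : ℚ) := by
    exact_mod_cast congrArg (Nat.cast : ℕ → ℚ) h0
  push_cast at h2
  rw [h1] at h2
  linarith [h2]

lemma apKey (n k : ℕ) (hk : k ≤ n + 2) :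
    ((n : ℚ) + 2)^3 * apFq (n+2) k
      - (34*((n : ℚ)+2)^3 - 51*((n : ℚ)+2)^2 + 27*((n : ℚ)+2) - 5) * apFq (n+1) k
      + ((n : ℚ) + 1)^3 * apFq n k
    = apG n (k+1) - apG n k := by
  have hy : ((k : ℚ)) ≤ (n : ℚ) + 2 := by exact_mod_cast hk
  have hx1 : ((n : ℚ) + 1) ≠ 0 := by positivity
  have hx2 : ((n : ℚ) + 2) ≠ 0 := by positivity
  have hy1 : ((k : ℚ) + 1) ≠ 0 := by positivity
  have hxy1 : ((n : ℚ) + 1 + (k : ℚ)) ≠ 0 := by positivity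
  have hxy2 : ((n : ℚ) + 2 + (k : ℚ)) ≠ 0 := by positivity
  -- c1 : C(n+1,k)
  have hc1 : ((n+1).choose k : ℚ) = ((n:ℚ)+2-k) * ((n+2).choose k : ℚ) / ((n:ℚ)+2) := by
    have h := ap_row (n+1) k (by omega)
    rw [show n+1+1 = n+2 by omega] at h
    push_cast at h
    field_simp
    linarith [h]
  -- c0 : C(n,k)
  have hc0 : (n.choose k : ℚ)
      = ((n:ℚ)+2-k) * ((n:ℚ)+1-k) * ((n+2).choose k : ℚ) / (((n:ℚ)+1)*((n:ℚ)+2)) := by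
    rcases Nat.lt_or_ge k (n+2) with h' | h'
    · have h := ap_row n k (by omega)
      rw [hc1] at h
      field_simp at h ⊢
      linarith [h]
    · have hk2 : k = n + 2 := by omega
      have hz : n.choose k = 0 := Nat.choose_eq_zero_of_lt (by omega)
      have hyx : (k : ℚ) = (n : ℚ) + 2 := by exact_mod_cast congrArg (Nat.cast : ℕ → ℚ) hk2
      rw [hz, hyx]
      push_cast
      ring
  -- c3 : C(n+2,k+1)
  have hc3 : ((n+2).choose (k+1) : ℚ) = ((n:ℚ)+2-k) * ((n+2).choose k : ℚ) / ((k:ℚ)+1) := by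
    have h := ap_col (n+2) k hk
    push_cast at h
    field_simp
    linarith [h]
  -- c5 : C(n+k+1,k)
  have hc5 : ((n+k+1).choose k : ℚ)
      = ((n:ℚ)+2) * ((n+k+2).choose k : ℚ) / ((n:ℚ)+2+k) := by
    have h := ap_row (n+k+1) k (by omega)
    rw [show n+k+1+1 = n+k+2 by omega] at h
    push_cast at h
    field_simp
    linarith [h]
  -- d0 : C(n+k,k)
  have hd0 : ((n+k).choose k : ℚ)
      = ((n:ℚ)+1) * ((n:ℚ)+2) * ((n+k+2).choose k : ℚ) / (((n:ℚ)+1+k)*((n:ℚ)+2+k)) := by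
    have h := ap_row (n+k) k (by omega)
    rw [show n+k+1 = n+k+1 by omega] at h
    rw [hc5] at h
    push_cast at h
    field_simp at h ⊢
    linarith [h]
  -- d2 : C(n+k+1,k+1)
  have hd2 : ((n+k+1).choose (k+1) : ℚ)
      = ((n:ℚ)+1) * ((n:ℚ)+2) * ((n+k+2).choose k : ℚ) / (((k:ℚ)+1)*((n:ℚ)+2+k)) := by
    have h := ap_col (n+k+1) k (by omega)
    rw [hc5] at h
    push_cast at h
    field_simp at h ⊢
    linarith [h]
  simp only [apFq, apG, apN]
  rw [show n+2+k = n+k+2 by omega, show n+1+k = n+k+1 by omega,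
      show n+(k+1) = n+k+1 by omega]
  rw [hc0, hc1, hc3, hd0, hc5, hd2]
  push_cast
  field_simp
  ring

/-- The Apéry numbers `A(n) = ∑_{k≤n} C(n,k)²·C(n+k,k)²` for `ζ(3)` satisfy, for `n ≥ 2`,
`n³·A(n) = (34n³ - 51n² + 27n - 5)·A(n-1) - (n-1)³·A(n-2)`. -/
theorem stmt14 (A : ℕ → ℤ)
    (hA : ∀ n : ℕ, A n =
      ∑ k ∈ Finset.range (n + 1), (n.choose k : ℤ) ^ 2 * ((n + k).choose k : ℤ) ^ 2) :
    ∀ n : ℕ, 2 ≤ n →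
      (n : ℤ) ^ 3 * A n =
        (34 * (n : ℤ) ^ 3 - 51 * (n : ℤ) ^ 2 + 27 * (n : ℤ) - 5) * A (n - 1) -
          ((n : ℤ) - 1) ^ 3 * A (n - 2) := by
  intro n hn
  obtain ⟨m, rfl⟩ : ∃ m, n = m + 2 := ⟨n - 2, by omega⟩
  rw [show m + 2 - 1 = m + 1 from rfl, show m + 2 - 2 = m from rfl]
  have hAq : ∀ j : ℕ, (A j : ℚ) = ∑ k ∈ Finset.range (j+1), apFq j k := by
    intro j
    rw [hA j]
    push_cast
    simp [apFq]
  have hS2 : ∑ k ∈ Finset.range (m+3), apFq (m+2) k = (A (m+2) : ℚ) := by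
    rw [hAq (m+2)]
  have hS1 : ∑ k ∈ Finset.range (m+3), apFq (m+1) k = (A (m+1) : ℚ) := by
    rw [Finset.sum_range_succ, hAq (m+1)]
    have hz : apFq (m+1) (m+2) = 0 := by
      simp [apFq, Nat.choose_eq_zero_of_lt (by omega : m+1 < m+2)]
    rw [hz]; ring
  have hS0 : ∑ k ∈ Finset.range (m+3), apFq m k = (A m : ℚ) := by
    rw [Finset.sum_range_succ, Finset.sum_range_succ, hAq m]
    have hz1 : apFq m (m+1) = 0 := by
      simp [apFq, Nat.choose_eq_zero_of_lt (by omega : m < m+1)]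
    have hz2 : apFq m (m+2) = 0 := by
      simp [apFq, Nat.choose_eq_zero_of_lt (by omega : m < m+2)]
    rw [hz1, hz2]; ring
  have tele : ∑ k ∈ Finset.range (m+3), (apG m (k+1) - apG m k) = apG m (m+3) - apG m 0 :=
    Finset.sum_range_sub (apG m) (m+3)
  have hG0 : apG m 0 = 0 := by simp [apG]
  have hGt : apG m (m+3) = 0 := by
    have hz : (m+2).choose (m+3) = 0 := Nat.choose_eq_zero_of_lt (by omega)
    simp [apG, hz]
  have main : ∑ k ∈ Finset.range (m+3),
      (((m:ℚ)+2)^3 * apFq (m+2) k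
        - (34*((m:ℚ)+2)^3 - 51*((m:ℚ)+2)^2 + 27*((m:ℚ)+2) - 5) * apFq (m+1) k
        + ((m:ℚ)+1)^3 * apFq m k) = 0 := by
    have step : ∀ k ∈ Finset.range (m+3),
        (((m:ℚ)+2)^3 * apFq (m+2) k
          - (34*((m:ℚ)+2)^3 - 51*((m:ℚ)+2)^2 + 27*((m:ℚ)+2) - 5) * apFq (m+1) k
          + ((m:ℚ)+1)^3 * apFq m k) = apG m (k+1) - apG m k := by
      intro k hk
      exact apKey m k (by have := Finset.mem_range.mp hk; omega)
    rw [Finset.sum_congr rfl step, tele, hG0, hGt]; ring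
  rw [Finset.sum_add_distrib, Finset.sum_sub_distrib, ← Finset.mul_sum, ← Finset.mul_sum,
      ← Finset.mul_sum, hS0, hS1, hS2] at main
  have final : ((m+2 : ℕ) : ℚ)^3 * (A (m+2) : ℚ)
      = (34*((m+2 : ℕ) : ℚ)^3 - 51*((m+2 : ℕ) : ℚ)^2 + 27*((m+2 : ℕ) : ℚ) - 5) * (A (m+1) : ℚ)
        - (((m+2 : ℕ) : ℚ) - 1)^3 * (A m : ℚ) := by
    push_cast
    linear_combination main
  exact_mod_cast final
end

section
/- Let B(n) = ∑_{k=0}^{n} C(n, k)² · C(n+k, k) be the n-th Apéry number for ζ(2) (B(0)=1, B(1)=3, B(2)=19, B(3)=147, B(4)=1251, …). Then for every n ≥ 2, n²·B(n) = (11n² − 11n + 3)·B(n−1) + (n−1)²·B(n−2). -/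
lemma hA (n k : ℕ) : ((n+1).choose k : ℚ) * ((n:ℚ)+1-k) = ((n:ℚ)+1) * (n.choose k : ℚ) := by
  rcases le_or_gt k (n+1) with h | h
  · have h2 := congrArg (Nat.cast : ℕ → ℚ) (Nat.choose_mul_succ_eq n k)
    push_cast [h] at h2
    linarith
  · have h1 : (n+1).choose k = 0 := Nat.choose_eq_zero_of_lt h
    have h2 : n.choose k = 0 := Nat.choose_eq_zero_of_lt (by omega)
    simp [h1, h2]

lemma hC (n k : ℕ) : ((n+1+k).choose k : ℚ) * ((n:ℚ)+1) = ((n:ℚ)+1+k) * ((n+k).choose k : ℚ) := by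
  have h := congrArg (Nat.cast : ℕ → ℚ) (Nat.choose_mul_succ_eq (n+k) k)
  rw [show n+k+1-k = n+1 by omega, show n+k+1 = n+1+k by omega] at h
  push_cast at h
  linarith

lemma hE (n k : ℕ) : (n.choose (k+1) : ℚ) * ((k:ℚ)+1) = ((n:ℚ)-k) * (n.choose k : ℚ) := by
  rcases le_or_gt k n with h | h
  · have h2 := congrArg (Nat.cast : ℕ → ℚ) (Nat.choose_succ_right_eq n k)
    push_cast [h] at h2
    linarith
  · have h1 : n.choose (k+1) = 0 := Nat.choose_eq_zero_of_lt (by omega)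
    have h2 : n.choose k = 0 := Nat.choose_eq_zero_of_lt h
    simp [h1, h2]

lemma hF (n k : ℕ) : ((n+k+1).choose (k+1) : ℚ) * ((k:ℚ)+1) = ((n:ℚ)+k+1) * ((n+k).choose k : ℚ) := by
  have h := congrArg (Nat.cast : ℕ → ℚ) (Nat.add_one_mul_choose_eq (n+k) k)
  push_cast at h
  linarith

/-- The certificate function `G(n,k)` with `n = m+2`. -/
noncomputable def gq (m k : ℕ) : ℚ :=
  (k:ℚ)^3 * ((k:ℚ)^2 + 6*((m:ℚ)+2)*k - 5*k - 11*((m:ℚ)+2)^2 + 7*((m:ℚ)+2))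
    * ((m+2).choose k : ℚ)^2 * ((m+2+k).choose k : ℚ)
    / (((m:ℚ)+2) * ((m:ℚ)+2+k) * ((m:ℚ)+1+k))

lemma key (m k : ℕ) :
    ((m:ℚ)+2)^2 * (((m+2).choose k : ℚ)^2 * ((m+2+k).choose k : ℚ))
      - (11*((m:ℚ)+2)^2 - 11*((m:ℚ)+2) + 3)
          * (((m+1).choose k : ℚ)^2 * ((m+1+k).choose k : ℚ))
      - ((m:ℚ)+1)^2 * ((m.choose k : ℚ)^2 * ((m+k).choose k : ℚ))
    = gq m (k+1) - gq m k := by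
  have d1 : ((m:ℚ)+2) ≠ 0 := by positivity
  have d2 : ((m:ℚ)+1) ≠ 0 := by positivity
  have d3 : ((m:ℚ)+2+k) ≠ 0 := by positivity
  have d4 : ((m:ℚ)+1+k) ≠ 0 := by positivity
  have d5 : ((k:ℚ)+1) ≠ 0 := by positivity
  have d6 : ((m:ℚ)+3+k) ≠ 0 := by positivity
  -- solved forms
  have e1 : ((m+1).choose k : ℚ) = ((m:ℚ)+2-k) * ((m+2).choose k : ℚ) / ((m:ℚ)+2) := by
    have h := hA (m+1) k
    rw [show m+1+1 = m+2 by omega] at h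
    push_cast at h
    field_simp
    linarith
  have e0 : (m.choose k : ℚ) = ((m:ℚ)+1-k) * ((m+1).choose k : ℚ) / ((m:ℚ)+1) := by
    have h := hA m k
    field_simp
    linarith
  have c1 : ((m+1+k).choose k : ℚ) = ((m:ℚ)+2) * ((m+2+k).choose k : ℚ) / ((m:ℚ)+2+k) := by
    have h := hC (m+1) k
    rw [show m+1+1+k = m+2+k by omega] at h
    push_cast at h
    field_simp
    linarith
  have c0 : ((m+k).choose k : ℚ) = ((m:ℚ)+1) * ((m+1+k).choose k : ℚ) / ((m:ℚ)+1+k) := by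
    have h := hC m k
    field_simp
    linarith
  have s1 : ((m+2).choose (k+1) : ℚ) = ((m:ℚ)+2-k) * ((m+2).choose k : ℚ) / ((k:ℚ)+1) := by
    have h := hE (m+2) k
    push_cast at h
    field_simp
    linarith
  have s2 : ((m+2+(k+1)).choose (k+1) : ℚ)
      = ((m:ℚ)+3+k) * ((m+2+k).choose k : ℚ) / ((k:ℚ)+1) := by
    have h := hF (m+2) k
    rw [show m+2+(k+1) = m+2+k+1 by omega]
    push_cast at h
    field_simp
    linarith
  rw [gq, gq, e0, e1, c0, c1, s1, s2]
  push_cast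
  field_simp
  ring

lemma gq_zero (m : ℕ) : gq m 0 = 0 := by
  simp [gq]

lemma gq_top (m : ℕ) : gq m (m+3) = 0 := by
  have : (m+2).choose (m+3) = 0 := Nat.choose_eq_zero_of_lt (by omega)
  simp [gq, this]

/-- The Apéry numbers `B(n) = ∑_{k≤n} C(n,k)²·C(n+k,k)` for `ζ(2)` satisfy, for `n ≥ 2`,
`n²·B(n) = (11n² - 11n + 3)·B(n-1) + (n-1)²·B(n-2)`. -/
theorem stmt15 (B : ℕ → ℤ)
    (hB : ∀ n : ℕ, B n =
      ∑ k ∈ Finset.range (n + 1), (n.choose k : ℤ) ^ 2 * ((n + k).choose k : ℤ)) :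
    ∀ n : ℕ, 2 ≤ n →
      (n : ℤ) ^ 2 * B n =
        (11 * (n : ℤ) ^ 2 - 11 * (n : ℤ) + 3) * B (n - 1) +
          ((n : ℤ) - 1) ^ 2 * B (n - 2) := by
  intro n hn
  obtain ⟨m, rfl⟩ : ∃ m, n = m + 2 := ⟨n - 2, by omega⟩
  rw [show m + 2 - 1 = m + 1 by omega, show m + 2 - 2 = m by omega, hB, hB, hB]
  have qgoal :
      ((m:ℚ)+2)^2 * ∑ k ∈ Finset.range (m+3), ((m+2).choose k : ℚ)^2 * ((m+2+k).choose k : ℚ)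
      = (11*((m:ℚ)+2)^2 - 11*((m:ℚ)+2) + 3)
          * ∑ k ∈ Finset.range (m+2), ((m+1).choose k : ℚ)^2 * ((m+1+k).choose k : ℚ)
        + ((m:ℚ)+1)^2 * ∑ k ∈ Finset.range (m+1), (m.choose k : ℚ)^2 * ((m+k).choose k : ℚ) := by
    have ext1 :
        ∑ k ∈ Finset.range (m+3), ((m+1).choose k : ℚ)^2 * ((m+1+k).choose k : ℚ)
        = ∑ k ∈ Finset.range (m+2), ((m+1).choose k : ℚ)^2 * ((m+1+k).choose k : ℚ) := by
      rw [Finset.sum_range_succ, Nat.choose_eq_zero_of_lt (by omega : m+1 < m+2)]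
      push_cast; ring
    have ext2 :
        ∑ k ∈ Finset.range (m+3), (m.choose k : ℚ)^2 * ((m+k).choose k : ℚ)
        = ∑ k ∈ Finset.range (m+1), (m.choose k : ℚ)^2 * ((m+k).choose k : ℚ) := by
      rw [Finset.sum_range_succ, Finset.sum_range_succ,
        Nat.choose_eq_zero_of_lt (by omega : m < m+2),
        Nat.choose_eq_zero_of_lt (by omega : m < m+1)]
      push_cast; ring
    have E :
        ((m:ℚ)+2)^2 * ∑ k ∈ Finset.range (m+3), ((m+2).choose k : ℚ)^2 * ((m+2+k).choose k : ℚ)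
        - (11*((m:ℚ)+2)^2 - 11*((m:ℚ)+2) + 3)
            * ∑ k ∈ Finset.range (m+3), ((m+1).choose k : ℚ)^2 * ((m+1+k).choose k : ℚ)
        - ((m:ℚ)+1)^2 * ∑ k ∈ Finset.range (m+3), (m.choose k : ℚ)^2 * ((m+k).choose k : ℚ)
        = 0 := by
      rw [Finset.mul_sum, Finset.mul_sum, Finset.mul_sum, ← Finset.sum_sub_distrib,
        ← Finset.sum_sub_distrib]
      calc
        _ = ∑ k ∈ Finset.range (m+3), (gq m (k+1) - gq m k) :=
          Finset.sum_congr rfl fun k _ => key m k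
        _ = gq m (m+3) - gq m 0 := Finset.sum_range_sub (gq m) (m+3)
        _ = 0 := by rw [gq_zero, gq_top]; ring
    linear_combination E + (11*((m:ℚ)+2)^2 - 11*((m:ℚ)+2) + 3) * ext1 + ((m:ℚ)+1)^2 * ext2
  rw [show m+2+1 = m+3 from rfl, show m+1+1 = m+2 from rfl]
  refine Int.cast_injective (α := ℚ) ?_
  push_cast
  linear_combination qgoal
end

section
/- Define the Motzkin numbers M : ℕ → ℕ by M(0) = 1, M(1) = 1, and M(n+2) = M(n+1) + ∑_{k=0}^{n} M(k)·M(n−k) (so M(2)=2, M(3)=4, M(4)=9, M(5)=21, M(6)=51, …). Then for every n ≥ 2, (n+2)·M(n) = (2n+1)·M(n−1) + 3·(n−1)·M(n−2); i.e., the Motzkin numbers, whose generating function is (1 − z − √(1 − 2z − 3z²))/(2z²), are P-recursive with the stated two-term recurrence. -/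
/-!
The generating function `S = ∑ M(n) zⁿ` satisfies `z²S² + (z - 1)S + 1 = 0`. Differentiating,
multiplying by `z(1 - 2z - 3z²)` and eliminating `S²` with the quadratic itself yields
`(2z²S + z - 1) · ((1 - 2z - 3z²)·zS' - (3z + 3z² - 2)S - 2) = 0`; the first factor has constant
coefficient `-1`, so it is a unit and `S` satisfies a linear differential equation with polynomial
coefficients. Comparing coefficients of `zⁿ` in it is the two-term recurrence.
-/

open PowerSeries

namespace PowerSeries

variable {R : Type*} [CommRing R]

theorem coeff_X_mul_derivative (f : R⟦X⟧) (n : ℕ) :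
    coeff n (X * d⁄dX R f) = n * coeff n f := by
  cases n with
  | zero => simp
  | succ n => rw [coeff_succ_X_mul, coeff_derivative]; push_cast; ring

theorem motzkin_quadratic_mk {a : ℕ → R} (h0 : a 0 = 1) (h1 : a 1 = 1)
    (ha : ∀ n, a (n + 2) = a (n + 1) + ∑ k ∈ Finset.range (n + 1), a k * a (n - k)) :
    X ^ 2 * mk a ^ 2 + (X - 1) * mk a + 1 = 0 := by
  ext (_ | _ | n)
  · simp [h0]
  · simp [sub_mul, coeff_succ_X_mul, coeff_X_pow_mul', h0, h1]
  · rw [map_add, map_add, coeff_X_pow_mul', sub_mul, map_sub, coeff_succ_X_mul, pow_two,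
      coeff_mul, Finset.Nat.sum_antidiagonal_eq_sum_range_succ_mk]
    simp [ha]

theorem motzkin_ode_of_quadratic {S : R⟦X⟧} (hS : X ^ 2 * S ^ 2 + (X - 1) * S + 1 = 0) :
    (1 - 2 * X - 3 * X ^ 2) * (X * d⁄dX R S) = (3 * X + 3 * X ^ 2 - 2) * S + 2 := by
  have hD : (2 * X ^ 2 * S + X - 1) * d⁄dX R S = -(2 * X * S ^ 2 + S) := by
    have := congrArg (d⁄dX R) hS
    simp only [map_add, map_sub, Derivation.leibniz, Derivation.leibniz_pow, derivative_X,
      Derivation.map_one_eq_zero, map_zero, smul_eq_mul] at this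
    linear_combination this
  have hunit : IsUnit (2 * X ^ 2 * S + X - 1) := by
    rw [isUnit_iff_constantCoeff]
    simp
  refine hunit.mul_left_cancel ?_
  linear_combination X * (1 - 2 * X - 3 * X ^ 2) * hD + 2 * (1 - X) * hS

theorem coeff_add_two_of_motzkin_ode {S : R⟦X⟧}
    (h : (1 - 2 * X - 3 * X ^ 2) * (X * d⁄dX R S) = (3 * X + 3 * X ^ 2 - 2) * S + 2) (m : ℕ) :
    (m + 4 : R) * coeff (m + 2) S = (2 * m + 5) * coeff (m + 1) S + 3 * (m + 1) * coeff m S := by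
  rw [show (2 : R⟦X⟧) = C 2 from (map_ofNat C 2).symm,
    show (3 : R⟦X⟧) = C 3 from (map_ofNat C 3).symm] at h
  have hT := coeff_X_mul_derivative S
  generalize X * d⁄dX R S = T at h hT
  have hcoeff := congrArg (coeff (m + 2)) h
  simp only [sub_mul, add_mul, one_mul, mul_assoc, map_sub, map_add, coeff_C_mul, coeff_C,
    coeff_succ_X_mul, coeff_X_pow_mul, hT, add_eq_zero, OfNat.ofNat_ne_zero, and_false,
    if_false] at hcoeff
  push_cast at hcoeff
  linear_combination hcoeff

end PowerSeries

/-- The Motzkin numbers, defined by `M(0) = M(1) = 1` and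
`M(n+2) = M(n+1) + ∑_{k≤n} M(k)·M(n-k)`, satisfy the two-term P-recurrence
`(n+2)·M(n) = (2n+1)·M(n-1) + 3·(n-1)·M(n-2)` for `n ≥ 2`. -/
theorem stmt16 (M : ℕ → ℕ) (h0 : M 0 = 1) (h1 : M 1 = 1)
    (hM : ∀ n : ℕ, M (n + 2) = M (n + 1) + ∑ k ∈ Finset.range (n + 1), M k * M (n - k)) :
    ∀ n : ℕ, 2 ≤ n → (n + 2) * M n = (2 * n + 1) * M (n - 1) + 3 * (n - 1) * M (n - 2) := by
  intro n hn
  obtain ⟨m, rfl⟩ := Nat.exists_eq_add_of_le' hn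
  have hS : X ^ 2 * mk (fun n => (M n : ℤ)) ^ 2 + (X - 1) * mk (fun n => (M n : ℤ)) + 1 = 0 :=
    motzkin_quadratic_mk (by simp [h0]) (by simp [h1]) (fun n => by simp [hM n])
  have key := coeff_add_two_of_motzkin_ode (motzkin_ode_of_quadratic hS) m
  simp only [coeff_mk] at key
  rw [show m + 2 - 1 = m + 1 by omega, Nat.add_sub_cancel]
  zify
  linear_combination key
end

section
/- Suppose S ∈ ℚ⟦X⟧ is a formal power series with constant coefficient 1 satisfying the algebraic equation 2X·S² − (1+X)·S + 1 = 0 (so S is the generating function (1 + z − √(1 − 6z + z²))/(4z) of the super-Catalan / little Schröder numbers, with coefficients s(0)=1, s(1)=1, s(2)=3, s(3)=11, s(4)=45, …). Then the coefficients s(n) of S satisfy, for every n ≥ 2, (n+1)·s(n) = 3·(2n−1)·s(n−1) − (n−2)·s(n−2). -/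
/-!
Differentiating `2XS² - (1+X)S + 1 = 0` and eliminating `S²` between the equation and its
derivative gives the linear differential equation `(1 - 3X)S + X(1 - 6X + X²)S' = 1 - X`,
where `1 - 6X + X²` is the discriminant of the quadratic. Comparing the coefficients of `X^n`
on both sides is the recurrence.
-/

open PowerSeries

section

variable {R : Type*}

theorem PowerSeries.coeff_X_mul_derivative_s17 [CommSemiring R] (f : R⟦X⟧) (n : ℕ) :
    coeff n (X * d⁄dX R f) = n * coeff n f := by
  cases n with
  | zero => simp
  | succ n => rw [coeff_succ_X_mul, coeff_derivative, mul_comm]; push_cast; rfl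

section CommRing

variable [CommRing R] {S : R⟦X⟧}

theorem derivative_schroeder_relation (hS : 2 * X * S ^ 2 - (1 + X) * S + 1 = 0) :
    2 * S ^ 2 + 4 * X * S * d⁄dX R S - S - (1 + X) * d⁄dX R S = 0 := by
  have h := congrArg (d⁄dX R) hS
  have h2 : d⁄dX R (2 : R⟦X⟧) = 0 := by
    rw [← map_ofNat C 2]; exact derivative_C
  simp only [map_sub, map_add, map_zero, Derivation.leibniz, Derivation.leibniz_pow, derivative_X,
    derivative_one, h2, smul_eq_mul, nsmul_eq_mul] at h
  linear_combination h

theorem schroeder_linear_ode (hS : 2 * X * S ^ 2 - (1 + X) * S + 1 = 0) :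
    (1 - 3 * X) * S + (X - 6 * X ^ 2 + X ^ 3) * d⁄dX R S = 1 - X := by
  have hunit : IsUnit (4 * X * S - 1 - X) := by
    rw [isUnit_iff_constantCoeff]; simp
  rw [← sub_eq_zero, ← hunit.mul_right_eq_zero]
  linear_combination (1 - X ^ 2) * hS + (X - 6 * X ^ 2 + X ^ 3) * derivative_schroeder_relation hS

theorem coeff_add_two_of_schroeder_linear_ode
    (h : (1 - 3 * X) * S + (X - 6 * X ^ 2 + X ^ 3) * d⁄dX R S = 1 - X) (n : ℕ) :
    (n + 3) * coeff (n + 2) S = (6 * n + 9) * coeff (n + 1) S - n * coeff n S := by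
  have h' : S + X * d⁄dX R S - X * (C 3 * S) - X * (C 6 * (X * d⁄dX R S))
      + X ^ 2 * (X * d⁄dX R S) = 1 - X := by
    simp only [map_ofNat]; linear_combination h
  have hc := congrArg (coeff (n + 2)) h'
  simp only [map_add, map_sub, coeff_succ_X_mul, coeff_derivative, Nat.cast_add, Nat.cast_one,
    coeff_C_mul, coeff_X_pow_mul', le_add_iff_nonneg_left, zero_le, ↓reduceIte,
    add_tsub_cancel_right, coeff_X_mul_derivative_s17, coeff_one, Nat.add_eq_zero_iff,
    OfNat.ofNat_ne_zero, and_false, coeff_X, Nat.reduceEqDiff, sub_self] at hc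
  linear_combination hc

end CommRing

end

theorem stmt17_general (S : PowerSeries ℚ)
    (hS : 2 * PowerSeries.X * S ^ 2 - (1 + PowerSeries.X) * S + 1 = 0)
    (s : ℕ → ℚ) (hs : ∀ n : ℕ, s n = PowerSeries.coeff n S) :
    ∀ n : ℕ, 2 ≤ n →
      ((n : ℚ) + 1) * s n =
        3 * (2 * (n : ℚ) - 1) * s (n - 1) - ((n : ℚ) - 2) * s (n - 2) := by
  intro n hn
  obtain ⟨m, rfl⟩ : ∃ m, n = m + 2 := ⟨n - 2, by omega⟩
  have hrec := coeff_add_two_of_schroeder_linear_ode (schroeder_linear_ode hS) m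
  rw [show m + 2 - 1 = m + 1 by omega, Nat.add_sub_cancel, hs, hs, hs]
  push_cast
  linear_combination hrec

/-- The coefficients `s(n)` of the generating function `S` of the super-Catalan
(little Schröder) numbers — the power series with constant term 1 satisfying
`2X·S² - (1+X)·S + 1 = 0` — satisfy `(n+1)·s(n) = 3(2n-1)·s(n-1) - (n-2)·s(n-2)`
for `n ≥ 2`. -/
theorem stmt17 (S : PowerSeries ℚ) (h1 : PowerSeries.constantCoeff S = 1)
    (hS : 2 * PowerSeries.X * S ^ 2 - (1 + PowerSeries.X) * S + 1 = 0)
    (s : ℕ → ℚ) (hs : ∀ n : ℕ, s n = PowerSeries.coeff n S) :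
    ∀ n : ℕ, 2 ≤ n →
      ((n : ℚ) + 1) * s n =
        3 * (2 * (n : ℚ) - 1) * s (n - 1) - ((n : ℚ) - 2) * s (n - 2) :=
  stmt17_general S hS s hs
end

section
/- Let T(n) denote the central trinomial coefficient, i.e., the coefficient of X^n in the polynomial (1 + X + X²)^n over ℤ (so T(0)=1, T(1)=1, T(2)=3, T(3)=7, T(4)=19, T(5)=51, …). Then for every n ≥ 2, n·T(n) = (2n−1)·T(n−1) + 3·(n−1)·T(n−2); i.e., the central trinomial coefficients, whose generating function is 1/√((1+z)(1−3z)), satisfy this two-term P-recurrence. -/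
open Polynomial

/-- Coefficient `k` of `(1+X+X²)^n`. -/
private noncomputable def ctri (n k : ℕ) : ℤ := ((1 + X + X ^ 2 : Polynomial ℤ) ^ n).coeff k

private lemma ctri_deriv (n : ℕ) :
    derivative ((1 + X + X ^ 2 : Polynomial ℤ) ^ (n + 1)) =
      C ((n : ℤ) + 1) * ((1 + X + X ^ 2 : Polynomial ℤ) ^ n * (1 + 2 * X)) := by
  rw [derivative_pow_succ]
  have : derivative (1 + X + X ^ 2 : Polynomial ℤ) = 1 + 2 * X := by
    simp [derivative_X_pow]
    try ring
  rw [this]; ring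

private lemma coeff_aux (n j : ℕ) :
    ((1 + X + X ^ 2 : Polynomial ℤ) ^ n * (1 + 2 * X)).coeff (j + 1)
      = ctri n (j + 1) + 2 * ctri n j := by
  have h : ((1 + X + X ^ 2 : Polynomial ℤ) ^ n * (1 + 2 * X))
      = (1 + X + X ^ 2) ^ n + 2 * ((1 + X + X ^ 2) ^ n * X) := by ring
  rw [h]
  simp [coeff_mul_X, ctri, mul_comm]

/-- Relation D: `(j+2)·c(n+1, j+2) = (n+1)·(c(n, j+1) + 2·c(n, j))`. -/
private lemma lemD (n j : ℕ) :
    ((j : ℤ) + 2) * ctri (n + 1) (j + 2) = ((n : ℤ) + 1) * (ctri n (j + 1) + 2 * ctri n j) := by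
  have h : (derivative ((1 + X + X ^ 2 : Polynomial ℤ) ^ (n + 1))).coeff (j + 1)
      = (C ((n : ℤ) + 1) * ((1 + X + X ^ 2 : Polynomial ℤ) ^ n * (1 + 2 * X))).coeff (j + 1) := by
    rw [ctri_deriv]
  rw [coeff_derivative, coeff_C_mul, coeff_aux] at h
  simp only [show j + 1 + 1 = j + 2 from rfl] at h
  unfold ctri
  unfold ctri at h
  push_cast at h ⊢
  linarith [h]

/-- Relation B (from `P · (Pⁿ)' = n(1+2X)Pⁿ`): ODE recurrence at fixed level. -/
private lemma lemB (n j : ℕ) :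
    ((j : ℤ) + 2) * ctri n (j + 2)
      = ((n : ℤ) - ((j : ℤ) + 1)) * ctri n (j + 1) + (2 * (n : ℤ) - (j : ℤ)) * ctri n j := by
  have key : (1 + X + X ^ 2 : Polynomial ℤ) * derivative ((1 + X + X ^ 2 : Polynomial ℤ) ^ n)
      = C (n : ℤ) * ((1 + X + X ^ 2 : Polynomial ℤ) ^ n * (1 + 2 * X)) := by
    cases n with
    | zero => simp
    | succ m =>
      rw [ctri_deriv m]
      push_cast
      ring
  set q : Polynomial ℤ := derivative ((1 + X + X ^ 2 : Polynomial ℤ) ^ n) with hq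
  have h : ((1 + X + X ^ 2 : Polynomial ℤ) * q).coeff (j + 1)
      = (C ((n : ℤ)) * ((1 + X + X ^ 2 : Polynomial ℤ) ^ n * (1 + 2 * X))).coeff (j + 1) := by
    rw [key]
  have hq1 : q.coeff (j + 1) = ((j : ℤ) + 2) * ctri n (j + 2) := by
    rw [hq, coeff_derivative]
    simp only [show j + 1 + 1 = j + 2 from rfl]
    unfold ctri; push_cast; ring
  have hq0 : q.coeff j = ((j : ℤ) + 1) * ctri n (j + 1) := by
    rw [hq, coeff_derivative]
    unfold ctri; push_cast; ring
  have hx2 : ((X : Polynomial ℤ) ^ 2 * q).coeff (j + 1) = (j : ℤ) * ctri n j := by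
    cases j with
    | zero => simp [coeff_X_pow_mul']
    | succ i =>
      have h2 : i + 1 + 1 = i + 2 := rfl
      rw [h2, coeff_X_pow_mul q 2 i, hq, coeff_derivative]
      unfold ctri
      push_cast
      ring
  have hl : ((1 + X + X ^ 2 : Polynomial ℤ) * q).coeff (j + 1)
      = q.coeff (j + 1) + q.coeff j + (X ^ 2 * q).coeff (j + 1) := by
    rw [show (1 + X + X ^ 2 : Polynomial ℤ) * q = q + X * q + X ^ 2 * q by ring]
    simp [coeff_X_mul]
  rw [hl, hq1, hq0, hx2, coeff_C_mul, coeff_aux] at h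
  linarith [h]

/-- `T(j+1) = T(j) + 2·U(j)` where `U(j) = c(j, j+1)`. -/
private lemma lemE : ∀ j : ℕ, ctri (j + 1) (j + 1) = ctri j j + 2 * ctri j (j + 1) := by
  intro j
  cases j with
  | zero =>
    unfold ctri
    norm_num [coeff_one, coeff_add, coeff_X_pow, coeff_X]
  | succ i =>
    have hD := lemD (i + 1) i
    have hB := lemB (i + 1) i
    have hne : ((i : ℤ) + 2) ≠ 0 := by positivity
    have hsym : ctri (i + 1) (i + 2) = ctri (i + 1) i := by
      apply mul_left_cancel₀ hne
      push_cast at hB ⊢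
      linarith [hB]
    apply mul_left_cancel₀ hne
    simp only [show i + 1 + 1 = i + 2 from rfl] at hD ⊢
    push_cast at hD hsym ⊢
    linear_combination hD - 2 * ((i : ℤ) + 2) * hsym

/-- The central trinomial coefficients `T(n)` — the coefficient of `X^n` in
`(1 + X + X²)^n` — satisfy `n·T(n) = (2n-1)·T(n-1) + 3(n-1)·T(n-2)` for `n ≥ 2`. -/
theorem stmt19 (T : ℕ → ℤ)
    (hT : ∀ n : ℕ, T n = ((1 + Polynomial.X + Polynomial.X ^ 2 : Polynomial ℤ) ^ n).coeff n) :
    ∀ n : ℕ, 2 ≤ n →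
      (n : ℤ) * T n = (2 * (n : ℤ) - 1) * T (n - 1) + 3 * ((n : ℤ) - 1) * T (n - 2) := by
  intro n hn
  obtain ⟨k, rfl⟩ : ∃ k, n = k + 2 := ⟨n - 2, by omega⟩
  have h1 : k + 2 - 1 = k + 1 := rfl
  have h2 : k + 2 - 2 = k := rfl
  rw [h1, h2, hT (k + 2), hT (k + 1), hT k]
  have hE1 := lemE k
  have hE2 := lemE (k + 1)
  have hE3 := lemD k k
  simp only [show k + 1 + 1 = k + 2 from rfl] at hE2
  unfold ctri at hE1 hE2 hE3
  push_cast at hE1 hE2 hE3 ⊢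
  linear_combination ((k : ℤ) + 2) * hE2 + 2 * hE3 - ((k : ℤ) + 1) * hE1
end
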